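/- arXiv:2401.15570 — 5 statements merged into one kernel-verified Lean document; each statement's English description precedes it below -/
import Mathlib

section
/- Given s, s' ∈ (0,∞)^d, i ∈ X, v' > 0 and ε ∈ (0,v'), there exists a sufficiently large R > 0 such that ln α(x,s',i,v') > ln α(x,s,i,v) for all x ∈ (0,∞)^d \ (0,R)^d and all v with 0 < v ≤ v' − ε. -/
/-!
Write `z = ln(x/s) - v·μ` (`μ` the drift) and `‖z‖_σ = |σ⁻¹z|`, the Mahalanobis norm of `a = σσᵀ`.
Then `ln α(x,s,i,v) = -‖z‖_σ²/(2v) - (d/2) ln v - K(x)` with `K` independent of `s` and `v`, and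
passing from `(s,v)` to `(s',v')` moves `z` by a vector of Mahalanobis norm at most a constant `c`.
With `q = ‖z‖_σ` and `ln v ≥ 1 - 1/v`, `ln α(x,s,i,v) + K(x) ≤ -(q² - d)/(2(v'-ε))`, while
`ln α(x,s',i,v') + K(x) ≥ -(q+c)²/(2v') - (d/2) ln v'`; since `v' - ε < v'` the first is smaller
once `q` is large, and `q` is large as soon as some coordinate of `x` is.
-/

open MeasureTheory Real Filter Matrix

noncomputable section

/-- The positive orthant `(0,∞)^d`. -/
def orthant (d : ℕ) : Set (Fin d → ℝ) := Set.univ.pi fun _ => Set.Ioi (0:ℝ)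

/-- The ℓ¹ norm `‖s‖₁ = ∑ l |s l|`. -/
def norm1 {d : ℕ} (s : Fin d → ℝ) : ℝ := ∑ l, |s l|

/-- The diffusion matrix `a(i) = σ(i) σ(i)ᵀ`. -/
def amat {d k : ℕ} (σm : Fin k → Matrix (Fin d) (Fin d) ℝ) (i : Fin k) :
    Matrix (Fin d) (Fin d) ℝ := σm i * (σm i)ᵀ

/-- The lognormal density `α(x,s,i,v)`. -/
def alpha {d k : ℕ} (r : Fin k → ℝ) (σm : Fin k → Matrix (Fin d) (Fin d) ℝ)
    (x s : Fin d → ℝ) (i : Fin k) (v : ℝ) : ℝ :=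
  Real.exp (-(1/2 : ℝ) * ∑ l, ∑ l',
      (v • amat σm i)⁻¹ l l'
        * (Real.log (x l / s l) - (r i - (1/2 : ℝ) * amat σm i l l) * v)
        * (Real.log (x l' / s l') - (r i - (1/2 : ℝ) * amat σm i l' l') * v))
    / (Real.sqrt ((2 * Real.pi) ^ d * (v • amat σm i).det) * ∏ l, x l)

open WithLp

section Mahalanobis

variable {ι : Type*} [Fintype ι] [DecidableEq ι]

def mahalanobisNorm (S : Matrix ι ι ℝ) (z : ι → ℝ) : ℝ := ‖toLp 2 (S⁻¹ *ᵥ z)‖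

theorem mahalanobisNorm_nonneg (S : Matrix ι ι ℝ) (z : ι → ℝ) : 0 ≤ mahalanobisNorm S z :=
  norm_nonneg _

theorem mahalanobisNorm_add_le (S : Matrix ι ι ℝ) (z w : ι → ℝ) :
    mahalanobisNorm S (z + w) ≤ mahalanobisNorm S z + mahalanobisNorm S w := by
  simp only [mahalanobisNorm, mulVec_add, toLp_add]
  exact norm_add_le _ _

theorem mahalanobisNorm_smul (S : Matrix ι ι ℝ) (t : ℝ) (z : ι → ℝ) :
    mahalanobisNorm S (t • z) = |t| * mahalanobisNorm S z := by
  simp only [mahalanobisNorm, mulVec_smul, toLp_smul, norm_smul, Real.norm_eq_abs]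

theorem sum_sum_inv_transpose_mul_inv_eq_mahalanobisNorm_sq (S : Matrix ι ι ℝ) (z : ι → ℝ) :
    ∑ l, ∑ l', (S⁻¹ᵀ * S⁻¹) l l' * z l * z l' = mahalanobisNorm S z ^ 2 := by
  have hdot : z ⬝ᵥ ((S⁻¹ᵀ * S⁻¹) *ᵥ z) = (S⁻¹ *ᵥ z) ⬝ᵥ (S⁻¹ *ᵥ z) := by
    rw [← mulVec_mulVec, dotProduct_mulVec, vecMul_transpose]
  have hquad : ∑ l, ∑ l', (S⁻¹ᵀ * S⁻¹) l l' * z l * z l' = z ⬝ᵥ ((S⁻¹ᵀ * S⁻¹) *ᵥ z) := by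
    simp only [dotProduct, mulVec, Finset.mul_sum]
    exact Finset.sum_congr rfl fun l _ => Finset.sum_congr rfl fun l' _ => by ring
  rw [hquad, hdot, mahalanobisNorm, EuclideanSpace.norm_sq_eq]
  simp only [Real.norm_eq_abs, ← sq, sq_abs, dotProduct]

theorem norm_toLp_le_mul_mahalanobisNorm {S : Matrix ι ι ℝ} (hS : IsUnit S.det) (z : ι → ℝ) :
    ‖toLp 2 z‖ ≤ ‖toEuclideanCLM (𝕜 := ℝ) S‖ * mahalanobisNorm S z := by
  have hz : toLp 2 z = toEuclideanCLM (𝕜 := ℝ) S (toLp 2 (S⁻¹ *ᵥ z)) := by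
    rw [toEuclideanCLM_toLp, mulVec_mulVec, mul_nonsing_inv _ hS, one_mulVec]
  exact hz ▸ (toEuclideanCLM (𝕜 := ℝ) S).le_opNorm _

theorem Matrix.inv_smul_mul_transpose {S : Matrix ι ι ℝ} (hS : IsUnit S.det) {v : ℝ}
    (hv : v ≠ 0) : (v • (S * Sᵀ))⁻¹ = v⁻¹ • (S⁻¹ᵀ * S⁻¹) := by
  have h : IsUnit (S * Sᵀ).det := by rw [det_mul, det_transpose]; exact hS.mul hS
  let := invertibleOfNonzero hv
  rw [Matrix.inv_smul _ v h, invOf_eq_inv, mul_inv_rev, transpose_nonsing_inv]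

end Mahalanobis

theorem sub_div_le_sq_div_add_mul_log {n q v ve : ℝ} (hn : 0 ≤ n) (hq : n ≤ q ^ 2) (hv : 0 < v)
    (hve : v ≤ ve) : (q ^ 2 - n) / (2 * ve) ≤ q ^ 2 / (2 * v) + n / 2 * log v := by
  have hlog : n / 2 * (1 - v⁻¹) ≤ n / 2 * log v :=
    mul_le_mul_of_nonneg_left (one_sub_inv_le_log_of_pos hv) (by positivity)
  have hmono : (q ^ 2 - n) / (2 * ve) ≤ (q ^ 2 - n) / (2 * v) :=
    div_le_div_of_nonneg_left (by linarith) (by positivity) (by linarith)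
  have hsplit : (q ^ 2 - n) / (2 * v) = q ^ 2 / (2 * v) + n / 2 * (-v⁻¹) := by
    field_simp; ring
  linarith

theorem eventually_sq_div_add_lt (n c v' ve L : ℝ) (hve : 0 < ve) (hlt : ve < v') :
    ∀ᶠ q in atTop, (q + c) ^ 2 / (2 * v') + L < (q ^ 2 - n) / (2 * ve) := by
  set δ := 1 / (2 * ve) - 1 / (2 * v')
  have hδ : 0 < δ := sub_pos.2 (one_div_lt_one_div_of_lt (by positivity) (by linarith))
  have hlin : Tendsto (fun q : ℝ => δ * q - c / v') atTop atTop :=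
    tendsto_atTop_add_const_right _ _ (tendsto_id.const_mul_atTop hδ)
  have hquad :
      Tendsto (fun q : ℝ => (q ^ 2 - n) / (2 * ve) - (q + c) ^ 2 / (2 * v')) atTop atTop := by
    refine tendsto_atTop_add_const_right _ (-(n / (2 * ve) + c ^ 2 / (2 * v')))
      (tendsto_id.atTop_mul_atTop₀ hlin) |>.congr fun q => ?_
    simp only [id, δ]
    field_simp
    ring
  filter_upwards [hquad.eventually_gt_atTop L] with q hq
  linarith

theorem exists_forall_sq_div_add_mul_log_lt (n c v' ve : ℝ) (hn : 0 ≤ n) (hve : 0 < ve)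
    (hlt : ve < v') :
    ∃ q₀, ∀ q q' v, q₀ ≤ q → 0 ≤ q' → q' ≤ q + c → 0 < v → v ≤ ve →
      q' ^ 2 / (2 * v') + n / 2 * log v' < q ^ 2 / (2 * v) + n / 2 * log v := by
  obtain ⟨q₀, hq₀⟩ := eventually_atTop.1 <| (eventually_sq_div_add_lt n c v' ve (n / 2 * log v')
    hve hlt).and ((tendsto_pow_atTop two_ne_zero).eventually_ge_atTop n)
  refine ⟨q₀, fun q q' v hq hq' hq'q hv hvve => ?_⟩
  obtain ⟨hgap, hnq⟩ := hq₀ q hq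
  calc q' ^ 2 / (2 * v') + n / 2 * log v' ≤ (q + c) ^ 2 / (2 * v') + n / 2 * log v' := by
        gcongr; linarith
    _ < (q ^ 2 - n) / (2 * ve) := hgap
    _ ≤ q ^ 2 / (2 * v) + n / 2 * log v := sub_div_le_sq_div_add_mul_log hn hnq hv hvve

section LognormalDensity

variable {d k : ℕ} (r : Fin k → ℝ) (σm : Fin k → Matrix (Fin d) (Fin d) ℝ) (i : Fin k)

def drift : Fin d → ℝ := fun l => r i - (1 / 2 : ℝ) * amat σm i l l

def logDeviation (x s : Fin d → ℝ) (v : ℝ) : Fin d → ℝ :=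
  fun l => log (x l / s l) - drift r σm i l * v

variable {r σm i}

theorem log_alpha_eq (hσ : IsUnit (σm i).det) {x : Fin d → ℝ} (hx : ∀ l, 0 < x l)
    (s : Fin d → ℝ) {v : ℝ} (hv : 0 < v) :
    log (alpha r σm x s i v) =
      -(mahalanobisNorm (σm i) (logDeviation r σm i x s v) ^ 2 / (2 * v)) - d / 2 * log v
        - (d / 2 * log (2 * π) + log (amat σm i).det / 2 + ∑ l, log (x l)) := by
  have hdet : 0 < (amat σm i).det := by
    rw [amat, det_mul, det_transpose]; exact mul_self_pos.2 hσ.ne_zero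
  have hdet_smul : (v • amat σm i).det = v ^ d * (amat σm i).det := by
    rw [det_smul, Fintype.card_fin]
  have hquad : ∑ l, ∑ l', (v • amat σm i)⁻¹ l l'
        * (log (x l / s l) - (r i - (1 / 2 : ℝ) * amat σm i l l) * v)
        * (log (x l' / s l') - (r i - (1 / 2 : ℝ) * amat σm i l' l') * v)
      = mahalanobisNorm (σm i) (logDeviation r σm i x s v) ^ 2 / v := by
    have hinv : (v • amat σm i)⁻¹ = v⁻¹ • ((σm i)⁻¹ᵀ * (σm i)⁻¹) :=
      inv_smul_mul_transpose hσ hv.ne'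
    rw [← sum_sum_inv_transpose_mul_inv_eq_mahalanobisNorm_sq, hinv, Finset.sum_div]
    refine Finset.sum_congr rfl fun l _ => ?_
    rw [Finset.sum_div]
    refine Finset.sum_congr rfl fun l' _ => ?_
    simp only [Matrix.smul_apply, smul_eq_mul, logDeviation, drift]
    ring
  have hX : 0 < ∏ l, x l := Finset.prod_pos fun l _ => hx l
  rw [alpha, hquad, hdet_smul, log_div (exp_ne_zero _) (by positivity), log_exp,
    log_mul (by positivity) hX.ne', log_sqrt (by positivity),
    log_prod fun l _ => (hx l).ne', log_mul (by positivity) (by positivity),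
    log_mul (by positivity) hdet.ne', log_pow, log_pow]
  ring

theorem logDeviation_eq_add {x s s' : Fin d → ℝ} (hx : ∀ l, 0 < x l) (hs : ∀ l, 0 < s l)
    (hs' : ∀ l, 0 < s' l) (v v' : ℝ) :
    logDeviation r σm i x s' v' = logDeviation r σm i x s v
      + ((fun l => log (s l) - log (s' l)) + (v - v') • drift r σm i) := by
  funext l
  simp only [logDeviation, Pi.add_apply, Pi.smul_apply, smul_eq_mul,
    log_div (hx l).ne' (hs l).ne', log_div (hx l).ne' (hs' l).ne']
  ring

theorem mahalanobisNorm_logDeviation_le {x s s' : Fin d → ℝ} (hx : ∀ l, 0 < x l)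
    (hs : ∀ l, 0 < s l) (hs' : ∀ l, 0 < s' l) {v v' : ℝ} (hv : 0 ≤ v) (hvv' : v ≤ v') :
    mahalanobisNorm (σm i) (logDeviation r σm i x s' v') ≤
      mahalanobisNorm (σm i) (logDeviation r σm i x s v)
        + (mahalanobisNorm (σm i) (fun l => log (s l) - log (s' l))
          + v' * mahalanobisNorm (σm i) (drift r σm i)) := by
  have hdrift : |v - v'| * mahalanobisNorm (σm i) (drift r σm i)
      ≤ v' * mahalanobisNorm (σm i) (drift r σm i) := by
    gcongr
    · exact mahalanobisNorm_nonneg _ _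
    · rw [abs_of_nonpos (by linarith)]; linarith
  rw [logDeviation_eq_add hx hs hs' v v']
  refine (mahalanobisNorm_add_le _ _ _).trans (add_le_add_right ?_ _)
  refine (mahalanobisNorm_add_le _ _ _).trans (add_le_add_right ?_ _)
  rwa [mahalanobisNorm_smul]

theorem log_le_norm_logDeviation_add {x s : Fin d → ℝ} (hx : ∀ l, 0 < x l) (hs : ∀ l, 0 < s l)
    {v v' : ℝ} (hv : 0 ≤ v) (hvv' : v ≤ v') (l : Fin d) :
    log (x l) ≤ ‖toLp 2 (logDeviation r σm i x s v)‖
      + (‖toLp 2 (fun l => log (s l))‖ + v' * ‖toLp 2 (drift r σm i)‖) := by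
  have hsplit : toLp 2 (fun l => log (x l)) = toLp 2 (logDeviation r σm i x s v)
      + (toLp 2 (fun l => log (s l)) + v • toLp 2 (drift r σm i)) := by
    ext l
    simp only [logDeviation, PiLp.add_apply, PiLp.smul_apply, smul_eq_mul,
      log_div (hx l).ne' (hs l).ne']
    ring
  have hdrift : ‖v • toLp 2 (drift r σm i)‖ ≤ v' * ‖toLp 2 (drift r σm i)‖ := by
    rw [norm_smul, Real.norm_of_nonneg hv]; gcongr
  calc log (x l) ≤ ‖toLp 2 (fun l => log (x l))‖ :=
        (le_abs_self _).trans (PiLp.norm_apply_le (toLp 2 fun l => log (x l)) l)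
    _ ≤ _ := by
        rw [hsplit]
        refine (norm_add_le _ _).trans (add_le_add_right ?_ _)
        exact (norm_add_le _ _).trans (add_le_add_right hdrift _)

end LognormalDensity

theorem stmt_3_general (d k : ℕ)
    (r : Fin k → ℝ)
    (σm : Fin k → Matrix (Fin d) (Fin d) ℝ) (hσ : ∀ i, IsUnit (σm i).det)
    (s s' : Fin d → ℝ) (hs : s ∈ orthant d) (hs' : s' ∈ orthant d)
    (i : Fin k) (v' ε : ℝ) (hv' : 0 < v') (hε : 0 < ε) (hεv : ε < v') :
    ∃ R : ℝ, 0 < R ∧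
      ∀ x ∈ orthant d \ Set.univ.pi (fun _ => Set.Ioo (0:ℝ) R),
        ∀ v : ℝ, 0 < v → v ≤ v' - ε →
          Real.log (alpha r σm x s i v) < Real.log (alpha r σm x s' i v') := by
  rw [orthant, Set.mem_univ_pi] at hs hs'
  obtain ⟨q₀, hq₀⟩ := exists_forall_sq_div_add_mul_log_lt d
    (mahalanobisNorm (σm i) (fun l => log (s l) - log (s' l))
      + v' * mahalanobisNorm (σm i) (drift r σm i)) v' (v' - ε) d.cast_nonneg (by linarith)
    (by linarith)
  set C := ‖toEuclideanCLM (𝕜 := ℝ) (σm i)‖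
  set S := ‖toLp 2 (fun l => log (s l))‖ + v' * ‖toLp 2 (drift r σm i)‖
  refine ⟨exp (C * q₀ + S + 1), exp_pos _, fun x ⟨hx, hxR⟩ v hv hvε => ?_⟩
  rw [orthant, Set.mem_univ_pi] at hx
  obtain ⟨l, hl⟩ : ∃ l, exp (C * q₀ + S + 1) ≤ x l := by
    by_contra! h
    exact hxR fun l _ => ⟨hx l, h l⟩
  have hlog : C * q₀ + S + 1 ≤ log (x l) := (le_log_iff_exp_le (hx l)).2 hl
  have hlower : log (x l) ≤ C * mahalanobisNorm (σm i) (logDeviation r σm i x s v) + S :=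
    (log_le_norm_logDeviation_add hx hs hv.le (by linarith) l).trans
      (add_le_add_left (norm_toLp_le_mul_mahalanobisNorm (hσ i) _) _)
  have hq : q₀ ≤ mahalanobisNorm (σm i) (logDeviation r σm i x s v) := by
    by_contra! h
    linarith [mul_le_mul_of_nonneg_left h.le (norm_nonneg (toEuclideanCLM (𝕜 := ℝ) (σm i)))]
  have hcompare := hq₀ _ _ v hq (mahalanobisNorm_nonneg _ _)
    (mahalanobisNorm_logDeviation_le hx hs hs' hv.le (by linarith)) hv hvε
  rw [log_alpha_eq (hσ i) hx s hv, log_alpha_eq (hσ i) hx s' hv']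
  linarith

theorem stmt_3 (d k : ℕ) (hd : 1 ≤ d) (hk : 0 < k)
    (r : Fin k → ℝ) (hr : ∀ i, 0 ≤ r i)
    (σm : Fin k → Matrix (Fin d) (Fin d) ℝ) (hσ : ∀ i, IsUnit (σm i).det)
    (s s' : Fin d → ℝ) (hs : s ∈ orthant d) (hs' : s' ∈ orthant d)
    (i : Fin k) (v' ε : ℝ) (hv' : 0 < v') (hε : 0 < ε) (hεv : ε < v') :
    ∃ R : ℝ, 0 < R ∧
      ∀ x ∈ orthant d \ Set.univ.pi (fun _ => Set.Ioo (0:ℝ) R),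
        ∀ v : ℝ, 0 < v → v ≤ v' - ε →
          Real.log (alpha r σm x s i v) < Real.log (alpha r σm x s' i v') :=
  stmt_3_general d k r σm hσ s s' hs hs' i v' ε hv' hε hεv
end
end

section
/- For all x, s ∈ (0,∞)^d, v > 0 and i ∈ X, setting g₁(x,s,i,v) = (∂α/∂v)/α and g₂^l(x,s,i,v) = (∂α/∂s_l)/α, the following identity holds: −g₁ + r(i) Σ_{l=1}^d s_l g₂^l + (1/2) Σ_{l=1}^d Σ_{l'=1}^d s_l s_{l'} a_{ll'}(i) (∂g₂^l/∂s_{l'} + g₂^l g₂^{l'}) = 0. -/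
open MeasureTheory Real Filter Matrix

noncomputable section

/-- Partial derivative in the `l`-th space coordinate. -/
def pd {d : ℕ} (l : Fin d) (f : (Fin d → ℝ) → ℝ) (s : Fin d → ℝ) : ℝ :=
  deriv (fun c => f (Function.update s l c)) (s l)

/-!
For `v > 0` the density is `exp φ` with the explicit log-density
`φ = -(z - z̃)ᵀ a⁻¹ (z - z̃) / (2v) - (d/2) log v + const`, so `g₁ = ∂φ/∂v` and `g₂^l = ∂φ/∂s_l`
are read off directly: with `u = a⁻¹ (z - z̃)` one gets `g₂^l = u_l / (v s_l)` and
`g₁ = (z - z̃) ⬝ u / (2v²) + c ⬝ u / v - d / (2v)`, where `z̃ = v c`. In the second-order term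
the factors `s_l s_l'` cancel, and it collapses by `∑ a_{ll'} (a⁻¹)_{ll'} = d` and
`uᵀ a u = (z - z̃) ⬝ u`.
-/

open Function (update)

theorem deriv_div_eq_of_eventuallyEq_exp {f φ : ℝ → ℝ} {t φ' : ℝ}
    (hf : f =ᶠ[nhds t] fun c => exp (φ c)) (hφ : HasDerivAt φ φ' t) :
    deriv f t / f t = φ' := by
  rw [hf.deriv_eq, hf.eq_of_nhds, hφ.exp.deriv]
  field_simp

section QuadraticForm

variable {n : Type*} [Fintype n] {f : ℝ → n → ℝ} {f' : n → ℝ} {t : ℝ}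

theorem hasDerivAt_mulVec_apply (B : Matrix n n ℝ)
    (hf : ∀ j, HasDerivAt (fun c => f c j) (f' j) t) (l : n) :
    HasDerivAt (fun c => (B *ᵥ f c) l) ((B *ᵥ f') l) t :=
  HasDerivAt.fun_sum fun j _ => (hf j).const_mul (B l j)

theorem Matrix.IsSymm.dotProduct_mulVec_comm {B : Matrix n n ℝ} (hB : B.IsSymm) (x y : n → ℝ) :
    x ⬝ᵥ (B *ᵥ y) = y ⬝ᵥ (B *ᵥ x) := by
  rw [dotProduct_mulVec, ← vecMul_transpose, hB.eq, dotProduct_comm]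

theorem hasDerivAt_dotProduct_mulVec {B : Matrix n n ℝ} (hB : B.IsSymm)
    (hf : ∀ j, HasDerivAt (fun c => f c j) (f' j) t) :
    HasDerivAt (fun c => f c ⬝ᵥ (B *ᵥ f c)) (2 * (f' ⬝ᵥ (B *ᵥ f t))) t := by
  have hsum : HasDerivAt (fun c => f c ⬝ᵥ (B *ᵥ f c))
      (f' ⬝ᵥ (B *ᵥ f t) + f t ⬝ᵥ (B *ᵥ f')) t := by
    rw [dotProduct, dotProduct, ← Finset.sum_add_distrib]
    exact HasDerivAt.fun_sum fun j _ => (hf j).mul (hasDerivAt_mulVec_apply B hf j)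
  rw [hB.dotProduct_mulVec_comm (f t), ← two_mul] at hsum
  exact hsum

theorem sum_sum_mul_inv_apply [DecidableEq n] {A : Matrix n n ℝ} (hA : A.IsSymm)
    (hdet : IsUnit A.det) :
    ∑ l, ∑ l', A l l' * A⁻¹ l l' = Fintype.card n := by
  calc ∑ l, ∑ l', A l l' * A⁻¹ l l' = ∑ l, (A * A⁻¹) l l :=
        Finset.sum_congr rfl fun l _ => by simp only [Matrix.mul_apply, hA.inv.apply]
    _ = Fintype.card n := by
        rw [Matrix.mul_nonsing_inv A hdet]
        simp

theorem inv_mulVec_dotProduct_mulVec [DecidableEq n] {A : Matrix n n ℝ} (hdet : IsUnit A.det)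
    (e : n → ℝ) : (A⁻¹ *ᵥ e) ⬝ᵥ (A *ᵥ (A⁻¹ *ᵥ e)) = e ⬝ᵥ (A⁻¹ *ᵥ e) := by
  rw [Matrix.mulVec_mulVec, Matrix.mul_nonsing_inv A hdet, Matrix.one_mulVec, dotProduct_comm]

end QuadraticForm

section LogDensity

variable {d : ℕ} (ρ : ℝ) (A : Matrix (Fin d) (Fin d) ℝ) (x s : Fin d → ℝ) (v : ℝ)

def driftRate : Fin d → ℝ := fun l => ρ - (1/2 : ℝ) * A l l

/-- The vector `z - z̃`, where `z̃ = v • driftRate ρ A`. -/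
def centeredLog : Fin d → ℝ := fun l => log (x l / s l) - driftRate ρ A l * v

def logDensity : ℝ :=
  -(centeredLog ρ A x s v ⬝ᵥ (A⁻¹ *ᵥ centeredLog ρ A x s v)) / (2 * v)
    - d / 2 * log v - log ((2 * π) ^ d * A.det) / 2 - ∑ l, log (x l)

theorem alpha_eq_exp_logDensity {k : ℕ} (r : Fin k → ℝ) (σm : Fin k → Matrix (Fin d) (Fin d) ℝ)
    (i : Fin k) (hdet : 0 < (amat σm i).det) (hx : ∀ l, 0 < x l) (hv : 0 < v) :
    alpha r σm x s i v = exp (logDensity (r i) (amat σm i) x s v) := by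
  have hinv : (v • amat σm i)⁻¹ = v⁻¹ • (amat σm i)⁻¹ :=
    Matrix.inv_smul' _ (Units.mk0 v hv.ne') hdet.ne'.isUnit
  have hexponent : -(1/2 : ℝ) * ∑ l, ∑ l', (v • amat σm i)⁻¹ l l'
        * (log (x l / s l) - (r i - (1/2 : ℝ) * amat σm i l l) * v)
        * (log (x l' / s l') - (r i - (1/2 : ℝ) * amat σm i l' l') * v)
      = -(centeredLog (r i) (amat σm i) x s v
          ⬝ᵥ ((amat σm i)⁻¹ *ᵥ centeredLog (r i) (amat σm i) x s v)) / (2 * v) := by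
    simp only [hinv, dotProduct, Matrix.mulVec, centeredLog, driftRate, Matrix.smul_apply,
      smul_eq_mul, Finset.mul_sum, neg_div, Finset.sum_div, ← Finset.sum_neg_distrib]
    refine Finset.sum_congr rfl fun l _ => Finset.sum_congr rfl fun l' _ => ?_
    field_simp
  have hK : 0 < (2 * π) ^ d * (amat σm i).det := by positivity
  have hP : 0 < ∏ l, x l := Finset.prod_pos fun l _ => hx l
  have hnormalizer : log (sqrt ((2 * π) ^ d * (v • amat σm i).det) * ∏ l, x l)
      = d / 2 * log v + log ((2 * π) ^ d * (amat σm i).det) / 2 + ∑ l, log (x l) := by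
    rw [Matrix.det_smul, Fintype.card_fin, mul_left_comm, log_mul (by positivity) hP.ne',
      log_sqrt (by positivity), log_mul (by positivity) hK.ne', log_pow,
      log_prod fun l _ => (hx l).ne']
    ring
  have hpos : 0 < sqrt ((2 * π) ^ d * (v • amat σm i).det) * ∏ l, x l := by
    rw [Matrix.det_smul, mul_left_comm]
    positivity
  rw [alpha, hexponent, logDensity, sub_sub, sub_sub, ← add_assoc, ← hnormalizer,
    exp_sub, exp_log hpos]

variable {ρ A x s v}

theorem hasDerivAt_centeredLog_v (j : Fin d) :
    HasDerivAt (fun w => centeredLog ρ A x s w j) ((-driftRate ρ A) j) v := by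
  have h := ((hasDerivAt_id v).const_mul (driftRate ρ A j)).const_sub (log (x j / s j))
  rw [mul_one] at h
  exact h

theorem hasDerivAt_logDensity_v (hA : A.IsSymm) (hv : v ≠ 0) :
    HasDerivAt (fun w => logDensity ρ A x s w)
      (centeredLog ρ A x s v ⬝ᵥ (A⁻¹ *ᵥ centeredLog ρ A x s v) / (2 * v ^ 2)
        + driftRate ρ A ⬝ᵥ (A⁻¹ *ᵥ centeredLog ρ A x s v) / v - d / (2 * v)) v := by
  have hQ := hasDerivAt_dotProduct_mulVec hA.inv
    (hasDerivAt_centeredLog_v (ρ := ρ) (A := A) (x := x) (s := s) (v := v))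
  have h := ((((hQ.neg.div ((hasDerivAt_id' v).const_mul 2) (by simpa using hv)).sub
    ((hasDerivAt_log hv).const_mul (d / 2 : ℝ))).sub_const
    (log ((2 * π) ^ d * A.det) / 2)).sub_const (∑ l, log (x l)))
  refine h.congr_deriv ?_
  simp only [Pi.neg_apply, neg_dotProduct]
  field_simp
  ring

theorem hasDerivAt_centeredLog_update {l : Fin d} (hx : x l ≠ 0) (hs : s l ≠ 0) (j : Fin d) :
    HasDerivAt (fun c => centeredLog ρ A x (update s l c) v j)
      ((Pi.single l (-(s l)⁻¹) : Fin d → ℝ) j) (s l) := by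
  rcases eq_or_ne j l with rfl | hjl
  · have h := (((hasDerivAt_inv hs).const_mul (x j)).log (div_ne_zero hx hs)).sub_const
      (driftRate ρ A j * v)
    simp only [centeredLog, Function.update_self, Pi.single_eq_same, div_eq_mul_inv]
    refine h.congr_deriv ?_
    field_simp
  · simpa [centeredLog, Function.update_of_ne hjl, Pi.single_eq_of_ne hjl] using
      hasDerivAt_const (s l) (centeredLog ρ A x s v j)

theorem hasDerivAt_logDensity_update (hA : A.IsSymm) {l : Fin d} (hx : x l ≠ 0) (hs : s l ≠ 0)
    (hv : v ≠ 0) :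
    HasDerivAt (fun c => logDensity ρ A x (update s l c) v)
      ((A⁻¹ *ᵥ centeredLog ρ A x s v) l / (v * s l)) (s l) := by
  have hQ := hasDerivAt_dotProduct_mulVec hA.inv
    (hasDerivAt_centeredLog_update (ρ := ρ) (A := A) (v := v) hx hs)
  have h := (((hQ.neg.div_const (2 * v)).sub_const (d / 2 * log v)).sub_const
    (log ((2 * π) ^ d * A.det) / 2)).sub_const (∑ l, log (x l))
  refine h.congr_deriv ?_
  simp only [Function.update_eq_self, single_dotProduct]
  field_simp

end LogDensity

section Alpha

variable {d k : ℕ} {r : Fin k → ℝ} {σm : Fin k → Matrix (Fin d) (Fin d) ℝ} {i : Fin k}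
  {x s : Fin d → ℝ} {v : ℝ}

theorem amat_isSymm (σm : Fin k → Matrix (Fin d) (Fin d) ℝ) (i : Fin k) : (amat σm i).IsSymm :=
  Matrix.isSymm_mul_transpose_self (σm i)

theorem amat_det_pos (hσ : IsUnit (σm i).det) : 0 < (amat σm i).det := by
  rw [amat, Matrix.det_mul, Matrix.det_transpose]
  exact mul_self_pos.2 hσ.ne_zero

theorem deriv_alpha_div_alpha (hσ : IsUnit (σm i).det) (hx : ∀ l, 0 < x l) (hv : 0 < v) :
    deriv (fun w => alpha r σm x s i w) v / alpha r σm x s i v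
      = centeredLog (r i) (amat σm i) x s v
            ⬝ᵥ ((amat σm i)⁻¹ *ᵥ centeredLog (r i) (amat σm i) x s v) / (2 * v ^ 2)
        + driftRate (r i) (amat σm i) ⬝ᵥ ((amat σm i)⁻¹ *ᵥ centeredLog (r i) (amat σm i) x s v) / v
        - d / (2 * v) :=
  deriv_div_eq_of_eventuallyEq_exp
    (Filter.eventually_of_mem (Ioi_mem_nhds hv) fun _ hw =>
      alpha_eq_exp_logDensity x s _ r σm i (amat_det_pos hσ) hx hw)
    (hasDerivAt_logDensity_v (amat_isSymm σm i) hv.ne')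

theorem pd_alpha_div_alpha (hσ : IsUnit (σm i).det) (hx : ∀ l, 0 < x l) (hv : 0 < v) {l : Fin d}
    (hs : s l ≠ 0) :
    pd l (fun s' => alpha r σm x s' i v) s / alpha r σm x s i v
      = ((amat σm i)⁻¹ *ᵥ centeredLog (r i) (amat σm i) x s v) l / (v * s l) := by
  have h := deriv_div_eq_of_eventuallyEq_exp
    (Filter.Eventually.of_forall fun c =>
      alpha_eq_exp_logDensity x (update s l c) v r σm i (amat_det_pos hσ) hx hv)
    (hasDerivAt_logDensity_update (amat_isSymm σm i) (hx l).ne' hs hv.ne')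
  rwa [Function.update_eq_self] at h

theorem pd_pd_alpha_div_alpha (hσ : IsUnit (σm i).det) (hx : ∀ l, 0 < x l) (hv : 0 < v)
    (hs : ∀ l, s l ≠ 0) (l l' : Fin d) :
    pd l' (fun s' => pd l (fun s'' => alpha r σm x s'' i v) s' / alpha r σm x s' i v) s
      = -((amat σm i)⁻¹ l l' / (v * s l * s l'))
        - if l = l' then
            ((amat σm i)⁻¹ *ᵥ centeredLog (r i) (amat σm i) x s v) l / (v * s l ^ 2)
          else 0 := by
  have hupdate : ∀ᶠ c in nhds (s l'), update s l' c l ≠ 0 := by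
    filter_upwards [eventually_ne_nhds (hs l')] with c hc
    rcases eq_or_ne l l' with rfl | hll
    · rwa [Function.update_self]
    · rw [Function.update_of_ne hll]
      exact hs l
  have hscore : (fun c => pd l (fun s'' => alpha r σm x s'' i v) (update s l' c)
        / alpha r σm x (update s l' c) i v)
      =ᶠ[nhds (s l')] fun c => ((amat σm i)⁻¹ *ᵥ centeredLog (r i) (amat σm i) x
        (update s l' c) v) l / (v * update s l' c l) :=
    hupdate.mono fun c hc => pd_alpha_div_alpha hσ hx hv hc
  have hnum := hasDerivAt_mulVec_apply (amat σm i)⁻¹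
    (hasDerivAt_centeredLog_update (ρ := r i) (A := amat σm i) (v := v) (hx l').ne' (hs l')) l
  have hden := (hasDerivAt_pi.1 (hasDerivAt_update s l' (s l')) l).const_mul v
  rw [pd, hscore.deriv_eq, (hnum.fun_div hden (by simpa using mul_ne_zero hv.ne' (hs l))).deriv]
  have hsingle : ((amat σm i)⁻¹ *ᵥ Pi.single l' (-(s l')⁻¹)) l = (amat σm i)⁻¹ l l' * -(s l')⁻¹ :=
    dotProduct_single _ _ _
  rw [Function.update_eq_self, hsingle]
  have hsl := hs l
  rcases eq_or_ne l l' with rfl | hll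
  · simp only [Pi.single_eq_same, ↓reduceIte]
    field_simp
  · have hsl' := hs l'
    simp only [Pi.single_eq_of_ne hll, if_neg hll]
    field_simp
    ring

end Alpha

theorem backward_equation_of_scores {d : ℕ} {ρ v : ℝ} {A : Matrix (Fin d) (Fin d) ℝ}
    (hA : A.IsSymm) (hdet : IsUnit A.det) (e s : Fin d → ℝ) (hs : ∀ l, s l ≠ 0) (hv : v ≠ 0) :
    -(e ⬝ᵥ (A⁻¹ *ᵥ e) / (2 * v ^ 2) + driftRate ρ A ⬝ᵥ (A⁻¹ *ᵥ e) / v - d / (2 * v))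
      + ρ * ∑ l, s l * ((A⁻¹ *ᵥ e) l / (v * s l))
      + (1/2 : ℝ) * ∑ l, ∑ l', s l * s l' * A l l' *
          ((-(A⁻¹ l l' / (v * s l * s l'))
              - if l = l' then (A⁻¹ *ᵥ e) l / (v * s l ^ 2) else 0)
            + (A⁻¹ *ᵥ e) l / (v * s l) * ((A⁻¹ *ᵥ e) l' / (v * s l')))
      = 0 := by
  set u := A⁻¹ *ᵥ e
  have hsummand : ∀ l l', s l * s l' * A l l' *
      ((-(A⁻¹ l l' / (v * s l * s l')) - if l = l' then u l / (v * s l ^ 2) else 0)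
        + u l / (v * s l) * (u l' / (v * s l')))
      = -(A l l' * A⁻¹ l l') / v - (if l = l' then A l l * u l / v else 0)
        + A l l' * u l * u l' / v ^ 2 := by
    intro l l'
    have hsl := hs l
    have hsl' := hs l'
    rcases eq_or_ne l l' with rfl | hll
    · simp only [↓reduceIte]
      field_simp
    · simp only [if_neg hll]
      field_simp
      ring
  have hdiag : ∑ l, ∑ l', (if l = l' then A l l * u l / v else 0) = ∑ l, A l l * u l / v := by
    simp only [Finset.sum_ite_eq, Finset.mem_univ, ↓reduceIte]
  have hquad : ∑ l, ∑ l', A l l' * u l * u l' = e ⬝ᵥ u := by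
    rw [← inv_mulVec_dotProduct_mulVec hdet e]
    refine Finset.sum_congr rfl fun l _ => ?_
    change _ = u l * ∑ l', A l l' * u l'
    rw [Finset.mul_sum]
    exact Finset.sum_congr rfl fun l' _ => by ring
  have hdrift : driftRate ρ A ⬝ᵥ u = ρ * ∑ l, u l - (1/2 : ℝ) * ∑ l, A l l * u l := by
    simp only [driftRate, dotProduct, sub_mul, Finset.sum_sub_distrib, Finset.mul_sum, mul_assoc]
  have hscore : ∑ l, s l * (u l / (v * s l)) = ∑ l, u l / v :=
    Finset.sum_congr rfl fun l _ => by field_simp [hs l]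
  simp only [hsummand, Finset.sum_add_distrib, Finset.sum_sub_distrib, hdiag, hquad, hscore,
    neg_div, Finset.sum_neg_distrib, ← Finset.sum_div, sum_sum_mul_inv_apply hA hdet, hdrift,
    Fintype.card_fin]
  field_simp
  ring

theorem stmt_9_general (d k : ℕ)
    (r : Fin k → ℝ)
    (σm : Fin k → Matrix (Fin d) (Fin d) ℝ) (hσ : ∀ i, IsUnit (σm i).det)
    (x s : Fin d → ℝ) (hx : x ∈ orthant d) (hs : s ∈ orthant d)
    (v : ℝ) (hv : 0 < v) (i : Fin k) :
    -(deriv (fun w => alpha r σm x s i w) v / alpha r σm x s i v)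
      + r i * ∑ l, s l *
          (pd l (fun s' => alpha r σm x s' i v) s / alpha r σm x s i v)
      + (1/2 : ℝ) * ∑ l, ∑ l', s l * s l' * amat σm i l l' *
          (pd l' (fun s' =>
              pd l (fun s'' => alpha r σm x s'' i v) s' / alpha r σm x s' i v) s
            + (pd l (fun s' => alpha r σm x s' i v) s / alpha r σm x s i v)
              * (pd l' (fun s' => alpha r σm x s' i v) s / alpha r σm x s i v))
      = 0 := by
  have hx' : ∀ l, 0 < x l := fun l => hx l (Set.mem_univ l)
  have hs' : ∀ l, s l ≠ 0 := fun l => (hs l (Set.mem_univ l)).ne'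
  rw [deriv_alpha_div_alpha (hσ i) hx' hv]
  simp only [pd_alpha_div_alpha (hσ i) hx' hv (hs' _), pd_pd_alpha_div_alpha (hσ i) hx' hv hs']
  exact backward_equation_of_scores (amat_isSymm σm i) (amat_det_pos (hσ i)).ne'.isUnit _ s hs'
    hv.ne'

theorem stmt_9 (d k : ℕ) (hd : 1 ≤ d) (hk : 0 < k)
    (r : Fin k → ℝ) (hr : ∀ i, 0 ≤ r i)
    (σm : Fin k → Matrix (Fin d) (Fin d) ℝ) (hσ : ∀ i, IsUnit (σm i).det)
    (x s : Fin d → ℝ) (hx : x ∈ orthant d) (hs : s ∈ orthant d)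
    (v : ℝ) (hv : 0 < v) (i : Fin k) :
    -(deriv (fun w => alpha r σm x s i w) v / alpha r σm x s i v)
      + r i * ∑ l, s l *
          (pd l (fun s' => alpha r σm x s' i v) s / alpha r σm x s i v)
      + (1/2 : ℝ) * ∑ l, ∑ l', s l * s l' * amat σm i l l' *
          (pd l' (fun s' =>
              pd l (fun s'' => alpha r σm x s'' i v) s' / alpha r σm x s' i v) s
            + (pd l (fun s' => alpha r σm x s' i v) s / alpha r σm x s i v)
              * (pd l' (fun s' => alpha r σm x s' i v) s / alpha r σm x s i v))
      = 0 :=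
  stmt_9_general d k r σm hσ x s hx hs v hv i
end
end

section
/- Let φ ∈ V be the unique solution of the integral equation (IE). Then φ is non-negative and of at most linear growth in the space variable: φ(t,s,i) ≥ 0 for all (t,s,i), and there is a constant M such that |φ(t,s,i)| ≤ M(1 + ‖s‖₁) for all (t,s,i) ∈ (0,T)×(0,∞)^d×X. -/
open MeasureTheory Real Filter Matrix

noncomputable section

/-- Membership in the space `V`: continuity on `(0,T)×(0,∞)^d×X` together with
at most linear growth in the space variable. -/
def MemV {d k : ℕ} (T : ℝ) (φ : ℝ → (Fin d → ℝ) → Fin k → ℝ) : Prop :=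
  (∀ i : Fin k, ContinuousOn (fun p : ℝ × (Fin d → ℝ) => φ p.1 p.2 i)
      (Set.Ioo 0 T ×ˢ orthant d)) ∧
  ∃ M : ℝ, ∀ t ∈ Set.Ioo (0:ℝ) T, ∀ s ∈ orthant d, ∀ i : Fin k,
      |φ t s i| ≤ M * (1 + norm1 s)

/-- The weighted sup-norm `‖φ‖_V = sup |φ(t,s,i)|/(1+‖s‖₁)`. -/
def Vnorm {d k : ℕ} (T : ℝ) (φ : ℝ → (Fin d → ℝ) → Fin k → ℝ) : ℝ :=
  sSup {y : ℝ | ∃ t ∈ Set.Ioo (0:ℝ) T, ∃ s ∈ orthant d, ∃ i : Fin k,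
      y = |φ t s i| / (1 + norm1 s)}

/-- The Black–Scholes–Merton type solution `η_i(t,s)`. -/
def eta {d k : ℕ} (r : Fin k → ℝ) (σm : Fin k → Matrix (Fin d) (Fin d) ℝ)
    (K : (Fin d → ℝ) → ℝ) (T : ℝ) (i : Fin k) (t : ℝ) (s : Fin d → ℝ) : ℝ :=
  if t < T then
    Real.exp (-(r i) * (T - t)) * ∫ x in orthant d, K x * alpha r σm x s i (T - t)
  else K s

/-- The operator `𝒜` from the integral equation. -/
def Aop {d k : ℕ} (r : Fin k → ℝ) (σm : Fin k → Matrix (Fin d) (Fin d) ℝ)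
    (Λ : Fin k → Fin k → ℝ) (K : (Fin d → ℝ) → ℝ) (T : ℝ)
    (φ : ℝ → (Fin d → ℝ) → Fin k → ℝ) (t : ℝ) (s : Fin d → ℝ) (i : Fin k) : ℝ :=
  Real.exp (-(-(Λ i i)) * (T - t)) * eta r σm K T i t s
  + ∫ v in (0:ℝ)..(T - t),
      Real.exp (-((-(Λ i i)) + r i) * v) *
        ∑ j ∈ Finset.univ.filter (fun j => j ≠ i), Λ i j *
          ∫ x in orthant d, φ (t + v) x j * alpha r σm x s i v

/-- `φ` solves the integral equation (IE) on `(0,T)×(0,∞)^d×X`. -/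
def SolvesIE {d k : ℕ} (r : Fin k → ℝ) (σm : Fin k → Matrix (Fin d) (Fin d) ℝ)
    (Λ : Fin k → Fin k → ℝ) (K : (Fin d → ℝ) → ℝ) (T : ℝ)
    (φ : ℝ → (Fin d → ℝ) → Fin k → ℝ) : Prop :=
  ∀ t ∈ Set.Ioo (0:ℝ) T, ∀ s ∈ orthant d, ∀ i : Fin k,
    φ t s i = Aop r σm Λ K T φ t s i

/-!
Nonnegativity comes from iterating (IE). Its free term `e^{-λ_i(T-t)} η_i` is nonnegative and
its kernel `e^{-(λ_i+r(i))v} λ_ij α(x,s,i,v)` is nonnegative, with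
`∫ (1+‖x‖₁) α(x,s,i,v) dx = 1 + e^{r(i)v} ∑ s_l ≤ e^{r(i)v} (1+‖s‖₁)`: the substitution
`x = s · exp((r(i) - a_ll(i)/2) v + √v σ(i) w)` turns `α` into the standard Gaussian density in `w`.
So a lower bound `φ ≥ -B(T-t) (1+‖s‖₁)` improves to `φ ≥ -(∫₀^{T-t} C B(T-t-v) dv) (1+‖s‖₁)`
with `C = ∑ λ_i`. Starting from the growth constant `M` of `φ ∈ V`, the `n`-th bound is
`M (C(T-t))^n / n! (1+‖s‖₁) → 0`.
-/

lemma measurableSet_orthant (d : ℕ) : MeasurableSet (orthant d) :=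
  MeasurableSet.univ_pi fun _ => measurableSet_Ioi

lemma norm1_nonneg {d : ℕ} (s : Fin d → ℝ) : 0 ≤ norm1 s :=
  Finset.sum_nonneg fun _ _ => abs_nonneg _

lemma alpha_nonneg {d k : ℕ} (r : Fin k → ℝ) (σm : Fin k → Matrix (Fin d) (Fin d) ℝ)
    {x : Fin d → ℝ} (hx : x ∈ orthant d) (s : Fin d → ℝ) (i : Fin k) (v : ℝ) :
    0 ≤ alpha r σm x s i v :=
  div_nonneg (exp_nonneg _)
    (mul_nonneg (sqrt_nonneg _) (Finset.prod_nonneg fun l _ => (hx l trivial).le))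

def tiltedGaussian (c x : ℝ) : ℝ := (√(2 * π))⁻¹ * exp (-(1 / 2) * x ^ 2 + c * x)

lemma tiltedGaussian_eq (c x : ℝ) :
    tiltedGaussian c x = (√(2 * π))⁻¹ * exp (c ^ 2 / 2) * exp (-(1 / 2) * (x - c) ^ 2) := by
  rw [tiltedGaussian, mul_assoc, ← exp_add]
  ring_nf

lemma integrable_tiltedGaussian (c : ℝ) : Integrable (tiltedGaussian c) := by
  simp_rw [funext (tiltedGaussian_eq c)]
  exact ((integrable_exp_neg_mul_sq (by norm_num : (0:ℝ) < 1 / 2)).comp_sub_right c).const_mul _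

lemma integral_tiltedGaussian (c : ℝ) : ∫ x, tiltedGaussian c x = exp (c ^ 2 / 2) := by
  simp_rw [tiltedGaussian_eq c, integral_const_mul,
    integral_sub_right_eq_self (fun x => exp (-(1 / 2) * x ^ 2)) c, integral_gaussian]
  have : √(2 * π) ≠ 0 := by positivity
  field_simp

lemma integrable_prod_tiltedGaussian {ι : Type*} [Fintype ι] (c : ι → ℝ) :
    Integrable (fun w : ι → ℝ => ∏ l, tiltedGaussian (c l) (w l)) :=
  Integrable.fintype_prod fun l => integrable_tiltedGaussian (c l)

lemma integral_prod_tiltedGaussian {ι : Type*} [Fintype ι] (c : ι → ℝ) :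
    ∫ w : ι → ℝ, ∏ l, tiltedGaussian (c l) (w l) = exp (∑ l, c l ^ 2 / 2) := by
  rw [integral_fintype_prod_volume_eq_prod (f := fun l => tiltedGaussian (c l)), exp_sum]
  simp_rw [integral_tiltedGaussian]

lemma exp_dotProduct_mul_prod_tiltedGaussian {ι : Type*} [Fintype ι] (c w : ι → ℝ) :
    exp (c ⬝ᵥ w) * ∏ l, tiltedGaussian 0 (w l) = ∏ l, tiltedGaussian (c l) (w l) := by
  simp only [tiltedGaussian, dotProduct, exp_sum, Finset.prod_mul_distrib, zero_mul, add_zero]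
  rw [mul_left_comm, ← Finset.prod_mul_distrib]
  simp_rw [← exp_add, add_comm]

lemma prod_tiltedGaussian_zero {d : ℕ} (w : Fin d → ℝ) :
    ∏ l, tiltedGaussian 0 (w l) = (√(2 * π) ^ d)⁻¹ * exp (-(1 / 2) * ∑ l, w l ^ 2) := by
  simp only [tiltedGaussian, zero_mul, add_zero, Finset.prod_mul_distrib, Finset.prod_const,
    Finset.card_univ, Fintype.card_fin, inv_pow, ← exp_sum, Finset.mul_sum]

section ExpAffine

variable {d : ℕ} (s μ : Fin d → ℝ) (G : Matrix (Fin d) (Fin d) ℝ)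

def expAffine (w : Fin d → ℝ) : Fin d → ℝ := fun l => s l * exp (μ l + (G *ᵥ w) l)

lemma hasFDerivAt_expAffine (w : Fin d → ℝ) :
    HasFDerivAt (expAffine s μ G)
      (LinearMap.toContinuousLinearMap (toLin' (diagonal (expAffine s μ G w) * G))) w := by
  refine hasFDerivAt_pi'.2 fun l => ?_
  have hrow : HasFDerivAt (fun w : Fin d → ℝ => μ l + (G *ᵥ w) l)
      ((ContinuousLinearMap.proj l).comp (LinearMap.toContinuousLinearMap (toLin' G))) w :=
    (hasFDerivAt_pi'.1 (LinearMap.toContinuousLinearMap (toLin' G)).hasFDerivAt l).const_add _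
  refine (hrow.exp.const_mul (s l)).congr_fderiv (ContinuousLinearMap.ext fun u => ?_)
  simp only [_root_.smul_apply, ContinuousLinearMap.comp_apply,
    LinearMap.coe_toContinuousLinearMap', toLin'_apply, ContinuousLinearMap.proj_apply,
    smul_eq_mul, toLin'_mul, LinearMap.coe_comp, Function.comp_apply, mulVec_diagonal, expAffine]
  ring

lemma det_expAffine_fderiv (w : Fin d → ℝ) :
    (LinearMap.toContinuousLinearMap (toLin' (diagonal (expAffine s μ G w) * G))).det
      = (∏ l, expAffine s μ G w l) * G.det := by
  rw [ContinuousLinearMap.det, LinearMap.coe_toContinuousLinearMap, LinearMap.det_toLin',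
    det_mul, det_diagonal]

variable {s}

lemma expAffine_mem_orthant (hs : s ∈ orthant d) (w : Fin d → ℝ) :
    expAffine s μ G w ∈ orthant d :=
  fun l _ => mul_pos (hs l trivial) (exp_pos _)

lemma log_expAffine_div (hs : s ∈ orthant d) (w : Fin d → ℝ) (l : Fin d) :
    log (expAffine s μ G w l / s l) = μ l + (G *ᵥ w) l := by
  rw [expAffine, mul_div_cancel_left₀ _ (hs l trivial).ne', log_exp]

variable {G}

lemma expAffine_injective (hs : s ∈ orthant d) (hG : IsUnit G.det) :
    Function.Injective (expAffine s μ G) := by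
  intro w w' h
  have hGw : G *ᵥ w = G *ᵥ w' := funext fun l =>
    add_left_cancel (exp_injective (mul_left_cancel₀ (hs l trivial).ne' (congrFun h l)))
  simpa [mulVec_mulVec, nonsing_inv_mul _ hG] using congrArg (G⁻¹ *ᵥ ·) hGw

lemma range_expAffine (hs : s ∈ orthant d) (hG : IsUnit G.det) :
    Set.range (expAffine s μ G) = orthant d := by
  refine (Set.range_subset_iff.2 (expAffine_mem_orthant μ G hs)).antisymm fun x hx => ?_
  refine ⟨G⁻¹ *ᵥ fun l => log (x l / s l) - μ l, funext fun l => ?_⟩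
  rw [expAffine, mulVec_mulVec, mul_nonsing_inv _ hG, one_mulVec, add_sub_cancel,
    exp_log (div_pos (hx l trivial) (hs l trivial)), mul_div_cancel₀ _ (hs l trivial).ne']

lemma abs_det_expAffine_fderiv (hs : s ∈ orthant d) (w : Fin d → ℝ) :
    |(LinearMap.toContinuousLinearMap (toLin' (diagonal (expAffine s μ G w) * G))).det|
      = (∏ l, expAffine s μ G w l) * |G.det| := by
  rw [det_expAffine_fderiv, abs_mul, abs_of_pos (Finset.prod_pos fun l _ =>
    expAffine_mem_orthant μ G hs w l trivial)]

lemma integrableOn_orthant_iff_expAffine (hs : s ∈ orthant d) (hG : IsUnit G.det)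
    (g : (Fin d → ℝ) → ℝ) :
    IntegrableOn g (orthant d) ↔
      Integrable fun w => (∏ l, expAffine s μ G w l) * |G.det| * g (expAffine s μ G w) := by
  rw [← range_expAffine μ hs hG, ← Set.image_univ,
    integrableOn_image_iff_integrableOn_abs_det_fderiv_smul volume MeasurableSet.univ
      (fun w _ => (hasFDerivAt_expAffine s μ G w).hasFDerivWithinAt)
      (expAffine_injective μ hs hG).injOn, integrableOn_univ]
  simp_rw [abs_det_expAffine_fderiv μ hs, smul_eq_mul]

lemma setIntegral_orthant_eq_integral_expAffine (hs : s ∈ orthant d) (hG : IsUnit G.det)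
    (g : (Fin d → ℝ) → ℝ) :
    ∫ x in orthant d, g x
      = ∫ w, (∏ l, expAffine s μ G w l) * |G.det| * g (expAffine s μ G w) := by
  rw [← range_expAffine μ hs hG, ← Set.image_univ,
    integral_image_eq_integral_abs_det_fderiv_smul volume MeasurableSet.univ
      (fun w _ => (hasFDerivAt_expAffine s μ G w).hasFDerivWithinAt)
      (expAffine_injective μ hs hG).injOn, setIntegral_univ]
  simp_rw [abs_det_expAffine_fderiv μ hs, smul_eq_mul]

end ExpAffine

section Moments

variable {d : ℕ} {s : Fin d → ℝ}

lemma one_add_norm1_expAffine_mul_prod_tiltedGaussian (hs : s ∈ orthant d)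
    (μ : Fin d → ℝ) (G : Matrix (Fin d) (Fin d) ℝ) (w : Fin d → ℝ) :
    (1 + norm1 (expAffine s μ G w)) * ∏ l, tiltedGaussian 0 (w l)
      = ∏ l, tiltedGaussian 0 (w l)
        + ∑ l, s l * exp (μ l) * ∏ l', tiltedGaussian (G l l') (w l') := by
  have hF : ∀ l, |expAffine s μ G w l| = s l * exp (μ l) * exp (G l ⬝ᵥ w) := fun l => by
    rw [abs_of_pos (expAffine_mem_orthant μ G hs w l trivial), expAffine, exp_add, mul_assoc]
    rfl
  simp_rw [norm1, hF, add_mul, one_mul, Finset.sum_mul, mul_assoc,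
    exp_dotProduct_mul_prod_tiltedGaussian]

lemma integrable_one_add_norm1_expAffine_mul (hs : s ∈ orthant d)
    (μ : Fin d → ℝ) (G : Matrix (Fin d) (Fin d) ℝ) :
    Integrable fun w => (1 + norm1 (expAffine s μ G w)) * ∏ l, tiltedGaussian 0 (w l) := by
  simp_rw [one_add_norm1_expAffine_mul_prod_tiltedGaussian hs]
  exact (integrable_prod_tiltedGaussian _).add
    (integrable_finsetSum _ fun l _ => (integrable_prod_tiltedGaussian _).const_mul _)

lemma integral_one_add_norm1_expAffine_mul (hs : s ∈ orthant d)
    (μ : Fin d → ℝ) (G : Matrix (Fin d) (Fin d) ℝ) :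
    ∫ w, (1 + norm1 (expAffine s μ G w)) * ∏ l, tiltedGaussian 0 (w l)
      = 1 + ∑ l, s l * exp (μ l + ∑ l', G l l' ^ 2 / 2) := by
  simp_rw [one_add_norm1_expAffine_mul_prod_tiltedGaussian hs]
  have hint : ∀ l, Integrable fun w : Fin d → ℝ =>
      s l * exp (μ l) * ∏ l', tiltedGaussian (G l l') (w l') := fun l =>
    (integrable_prod_tiltedGaussian _).const_mul _
  rw [integral_add (integrable_prod_tiltedGaussian fun _ => 0)
      (integrable_finsetSum _ fun l _ => hint l), integral_finsetSum _ fun l _ => hint l]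
  simp_rw [integral_const_mul, integral_prod_tiltedGaussian, exp_add, mul_assoc]
  simp

end Moments

lemma sum_sum_mul_eq_dotProduct_mulVec {d : ℕ} (A : Matrix (Fin d) (Fin d) ℝ) (y : Fin d → ℝ) :
    ∑ l, ∑ l', A l l' * y l * y l' = y ⬝ᵥ (A *ᵥ y) := by
  simp only [dotProduct, mulVec, Finset.mul_sum]
  exact Finset.sum_congr rfl fun l _ => Finset.sum_congr rfl fun l' _ => by ring

section Lognormal

variable {d k : ℕ} (r : Fin k → ℝ) (σm : Fin k → Matrix (Fin d) (Fin d) ℝ) (i : Fin k) (v : ℝ)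

-- `α(·,s,i,v)` is the density of `s * exp (lognormalDrift + lognormalScale *ᵥ W)`,
-- `W` standard normal.
def lognormalScale : Matrix (Fin d) (Fin d) ℝ := √v • σm i

def lognormalDrift : Fin d → ℝ := fun l => (r i - (1 / 2) * amat σm i l l) * v

variable {v}

lemma lognormalScale_mul_transpose (hv : 0 ≤ v) :
    lognormalScale σm i v * (lognormalScale σm i v)ᵀ = v • amat σm i := by
  rw [lognormalScale, transpose_smul, Matrix.smul_mul, Matrix.mul_smul, smul_smul,
    mul_self_sqrt hv, amat]

lemma lognormalDrift_add_sum_sq (hv : 0 ≤ v) (l : Fin d) :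
    lognormalDrift r σm i v l + ∑ l', lognormalScale σm i v l l' ^ 2 / 2 = r i * v := by
  have hdiag : ∑ l', lognormalScale σm i v l l' ^ 2 = v * amat σm i l l := by
    rw [← smul_eq_mul, ← Matrix.smul_apply, ← lognormalScale_mul_transpose σm i hv, mul_apply]
    simp_rw [transpose_apply, sq]
  rw [← Finset.sum_div, hdiag, lognormalDrift]
  ring

variable {σm i}

lemma isUnit_det_lognormalScale (hσ : IsUnit (σm i).det) (hv : 0 < v) :
    IsUnit (lognormalScale σm i v).det := by
  rw [lognormalScale, det_smul, isUnit_iff_ne_zero]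
  exact mul_ne_zero (pow_ne_zero _ (sqrt_pos.2 hv).ne') hσ.ne_zero

lemma quadForm_inv_mulVec_lognormalScale (hσ : IsUnit (σm i).det) (hv : 0 < v) (u : Fin d → ℝ) :
    ∑ l, ∑ l', (v • amat σm i)⁻¹ l l' * (lognormalScale σm i v *ᵥ u) l
      * (lognormalScale σm i v *ᵥ u) l' = ∑ l, u l ^ 2 := by
  set G := lognormalScale σm i v
  have hG := isUnit_det_lognormalScale hσ hv
  have h1 : (v • amat σm i)⁻¹ *ᵥ (G *ᵥ u) = Gᵀ⁻¹ *ᵥ u := by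
    rw [← lognormalScale_mul_transpose σm i hv.le, Matrix.mul_inv_rev, mulVec_mulVec,
      Matrix.mul_assoc, nonsing_inv_mul _ hG, Matrix.mul_one]
  have h2 : (G *ᵥ u) ᵥ* Gᵀ⁻¹ = u := by
    rw [← transpose_nonsing_inv, vecMul_transpose, mulVec_mulVec, nonsing_inv_mul _ hG,
      one_mulVec]
  rw [sum_sum_mul_eq_dotProduct_mulVec, h1, dotProduct_mulVec, h2]
  simp [dotProduct, sq]

lemma sqrt_alpha_normalizer_eq (hv : 0 ≤ v) :
    √((2 * π) ^ d * (v • amat σm i).det) = √(2 * π) ^ d * |(lognormalScale σm i v).det| := by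
  have h2π : (√(2 * π) ^ d) ^ 2 = (2 * π) ^ d := by
    rw [← pow_mul, mul_comm d, pow_mul, sq_sqrt (by positivity)]
  rw [← lognormalScale_mul_transpose σm i hv, det_mul, det_transpose, ← sq, ← sq_abs, ← h2π,
    ← mul_pow, sqrt_sq (by positivity)]

end Lognormal

section LognormalChangeOfVariables

variable {d k : ℕ} {r : Fin k → ℝ} {σm : Fin k → Matrix (Fin d) (Fin d) ℝ} {i : Fin k} {v : ℝ}
  {s : Fin d → ℝ}

lemma prod_mul_alpha_expAffine (hσ : IsUnit (σm i).det) (hv : 0 < v) (hs : s ∈ orthant d)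
    (w : Fin d → ℝ) :
    let F := expAffine s (lognormalDrift r σm i v) (lognormalScale σm i v)
    (∏ l, F w l) * |(lognormalScale σm i v).det| * alpha r σm (F w) s i v
      = ∏ l, tiltedGaussian 0 (w l) := by
  intro F
  have hlog : ∀ l, log (F w l / s l) - (r i - 1 / 2 * amat σm i l l) * v
      = (lognormalScale σm i v *ᵥ w) l := fun l => by
    rw [log_expAffine_div _ _ hs, lognormalDrift, add_sub_cancel_left]
  have hF : 0 < ∏ l, F w l :=
    Finset.prod_pos fun l _ => expAffine_mem_orthant _ _ hs w l trivial
  have hG : 0 < |(lognormalScale σm i v).det| :=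
    abs_pos.2 (isUnit_det_lognormalScale hσ hv).ne_zero
  simp_rw [alpha, hlog, quadForm_inv_mulVec_lognormalScale hσ hv, sqrt_alpha_normalizer_eq hv.le,
    prod_tiltedGaussian_zero]
  field_simp

end LognormalChangeOfVariables

section LognormalMoments

variable {d k : ℕ} {r : Fin k → ℝ} {σm : Fin k → Matrix (Fin d) (Fin d) ℝ} {i : Fin k} {v : ℝ}
  {s : Fin d → ℝ}

lemma integrableOn_mul_alpha_iff (hσ : IsUnit (σm i).det) (hv : 0 < v) (hs : s ∈ orthant d)
    (g : (Fin d → ℝ) → ℝ) :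
    IntegrableOn (fun x => g x * alpha r σm x s i v) (orthant d) ↔
      Integrable fun w => g (expAffine s (lognormalDrift r σm i v) (lognormalScale σm i v) w)
        * ∏ l, tiltedGaussian 0 (w l) := by
  simp_rw [integrableOn_orthant_iff_expAffine (lognormalDrift r σm i v) hs
      (isUnit_det_lognormalScale hσ hv),
    mul_left_comm _ (g _), prod_mul_alpha_expAffine hσ hv hs]

lemma setIntegral_mul_alpha (hσ : IsUnit (σm i).det) (hv : 0 < v) (hs : s ∈ orthant d)
    (g : (Fin d → ℝ) → ℝ) :
    ∫ x in orthant d, g x * alpha r σm x s i v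
      = ∫ w, g (expAffine s (lognormalDrift r σm i v) (lognormalScale σm i v) w)
        * ∏ l, tiltedGaussian 0 (w l) := by
  simp_rw [setIntegral_orthant_eq_integral_expAffine (lognormalDrift r σm i v) hs
      (isUnit_det_lognormalScale hσ hv),
    mul_left_comm _ (g _), prod_mul_alpha_expAffine hσ hv hs]

lemma integrableOn_one_add_norm1_mul_alpha (hσ : IsUnit (σm i).det) (hv : 0 < v)
    (hs : s ∈ orthant d) :
    IntegrableOn (fun x => (1 + norm1 x) * alpha r σm x s i v) (orthant d) :=
  (integrableOn_mul_alpha_iff hσ hv hs _).2 (integrable_one_add_norm1_expAffine_mul hs _ _)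

lemma setIntegral_one_add_norm1_mul_alpha (hσ : IsUnit (σm i).det) (hv : 0 < v)
    (hs : s ∈ orthant d) :
    ∫ x in orthant d, (1 + norm1 x) * alpha r σm x s i v = 1 + exp (r i * v) * ∑ l, s l := by
  rw [setIntegral_mul_alpha hσ hv hs, integral_one_add_norm1_expAffine_mul hs,
    Finset.mul_sum]
  simp_rw [lognormalDrift_add_sum_sq r σm i hv.le, mul_comm]

lemma setIntegral_one_add_norm1_mul_alpha_le (hr : 0 ≤ r i) (hσ : IsUnit (σm i).det)
    (hv : 0 < v) (hs : s ∈ orthant d) :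
    ∫ x in orthant d, (1 + norm1 x) * alpha r σm x s i v ≤ exp (r i * v) * (1 + norm1 s) := by
  have hsum : norm1 s = ∑ l, s l := Finset.sum_congr rfl fun l _ => abs_of_pos (hs l trivial)
  rw [setIntegral_one_add_norm1_mul_alpha hσ hv hs, hsum, mul_one_add]
  gcongr
  exact one_le_exp (mul_nonneg hr hv.le)

end LognormalMoments

-- No integrability of `f` is needed: where `f` is not integrable, `∫ f = 0`.
lemma neg_integral_le_integral {α : Type*} [MeasurableSpace α] {μ : Measure α} {f g : α → ℝ}
    (hg : Integrable g μ) (hg0 : 0 ≤ᵐ[μ] g) (hfg : ∀ᵐ x ∂μ, -g x ≤ f x) :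
    -∫ x, g x ∂μ ≤ ∫ x, f x ∂μ := by
  by_cases hf : Integrable f μ
  · rw [← integral_neg]
    exact integral_mono_ae hg.neg hf hfg
  · rw [integral_undef hf, neg_nonpos]
    exact integral_nonneg_of_ae hg0

lemma neg_intervalIntegral_le_intervalIntegral {f g : ℝ → ℝ} {a b : ℝ} (hab : a ≤ b)
    (hg : IntervalIntegrable g volume a b) (hg0 : ∀ x ∈ Set.Ioo a b, 0 ≤ g x)
    (hfg : ∀ x ∈ Set.Ioo a b, -g x ≤ f x) :
    -∫ x in a..b, g x ≤ ∫ x in a..b, f x := by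
  rw [intervalIntegral.integral_of_le hab, intervalIntegral.integral_of_le hab,
    integral_Ioc_eq_integral_Ioo, integral_Ioc_eq_integral_Ioo]
  exact neg_integral_le_integral (hg.1.mono_set Set.Ioo_subset_Ioc_self)
    (ae_restrict_of_forall_mem measurableSet_Ioo hg0)
    (ae_restrict_of_forall_mem measurableSet_Ioo hfg)

lemma integral_mul_pow_sub_div_factorial (M C τ : ℝ) (n : ℕ) :
    ∫ v in (0:ℝ)..τ, C * (M * (C * (τ - v)) ^ n / n.factorial)
      = M * (C * τ) ^ (n + 1) / (n + 1).factorial := by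
  simp_rw [mul_pow, show ∀ v : ℝ, C * (M * (C ^ n * (τ - v) ^ n) / n.factorial)
    = C * M * C ^ n / n.factorial * (τ - v) ^ n from fun v => by ring]
  rw [intervalIntegral.integral_const_mul, intervalIntegral.integral_comp_sub_left
    (fun v => v ^ n), sub_self, sub_zero, integral_pow, Nat.factorial_succ]
  push_cast
  field_simp
  ring

section Generator

variable {k : ℕ} {Λ : Fin k → Fin k → ℝ}

lemma sum_offDiag_eq_neg_diag (hΛ2 : ∀ i, ∑ j, Λ i j = 0) (i : Fin k) :
    ∑ j ∈ Finset.univ.filter (fun j => j ≠ i), Λ i j = -Λ i i := by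
  rw [Finset.filter_ne', Finset.sum_erase_eq_sub (Finset.mem_univ i), hΛ2, zero_sub]

lemma neg_diag_nonneg (hΛ1 : ∀ i j, i ≠ j → 0 ≤ Λ i j) (hΛ2 : ∀ i, ∑ j, Λ i j = 0)
    (i : Fin k) : 0 ≤ -Λ i i := by
  rw [← sum_offDiag_eq_neg_diag hΛ2]
  exact Finset.sum_nonneg fun j hj => hΛ1 i j (Finset.mem_filter.1 hj).2.symm

lemma neg_mul_le_sum_offDiag_mul (hΛ1 : ∀ i j, i ≠ j → 0 ≤ Λ i j)
    (hΛ2 : ∀ i, ∑ j, Λ i j = 0) {i : Fin k} {b : ℝ} {I : Fin k → ℝ}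
    (hI : ∀ j, -b ≤ I j) :
    -(-Λ i i * b) ≤ ∑ j ∈ Finset.univ.filter (fun j => j ≠ i), Λ i j * I j := by
  rw [← sum_offDiag_eq_neg_diag hΛ2, Finset.sum_mul, ← Finset.sum_neg_distrib]
  refine Finset.sum_le_sum fun j hj => ?_
  rw [← mul_neg]
  exact mul_le_mul_of_nonneg_left (hI j) (hΛ1 i j (Finset.mem_filter.1 hj).2.symm)

end Generator

section IntegralEquation

variable {d k : ℕ} {r : Fin k → ℝ} {σm : Fin k → Matrix (Fin d) (Fin d) ℝ}
  {Λ : Fin k → Fin k → ℝ} {K : (Fin d → ℝ) → ℝ} {T : ℝ} {φ : ℝ → (Fin d → ℝ) → Fin k → ℝ}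

lemma eta_nonneg (r : Fin k → ℝ) (σm : Fin k → Matrix (Fin d) (Fin d) ℝ)
    (hK0 : ∀ s ∈ orthant d, 0 ≤ K s) (T : ℝ) (i : Fin k) (t : ℝ) {s : Fin d → ℝ}
    (hs : s ∈ orthant d) : 0 ≤ eta r σm K T i t s := by
  unfold eta
  split_ifs
  · exact mul_nonneg (exp_nonneg _) (setIntegral_nonneg (measurableSet_orthant d)
      fun x hx => mul_nonneg (hK0 x hx) (alpha_nonneg r σm hx s i _))
  · exact hK0 s hs

lemma neg_le_setIntegral_mul_alpha {i : Fin k} {v : ℝ} {s : Fin d → ℝ} (hr : 0 ≤ r i)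
    (hσ : IsUnit (σm i).det) (hv : 0 < v) (hs : s ∈ orthant d) {B : ℝ} (hB : 0 ≤ B)
    {f : (Fin d → ℝ) → ℝ} (hf : ∀ x ∈ orthant d, -(B * (1 + norm1 x)) ≤ f x) :
    -(B * (exp (r i * v) * (1 + norm1 s))) ≤ ∫ x in orthant d, f x * alpha r σm x s i v := by
  calc -(B * (exp (r i * v) * (1 + norm1 s)))
      ≤ -∫ x in orthant d, B * (1 + norm1 x) * alpha r σm x s i v := by
        simp_rw [mul_assoc, integral_const_mul]
        exact neg_le_neg (mul_le_mul_of_nonneg_left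
          (setIntegral_one_add_norm1_mul_alpha_le hr hσ hv hs) hB)
    _ ≤ ∫ x in orthant d, f x * alpha r σm x s i v := by
        refine neg_integral_le_integral ?_ ?_ ?_
        · simp_rw [mul_assoc]
          exact (integrableOn_one_add_norm1_mul_alpha hσ hv hs).const_mul B
        · exact ae_restrict_of_forall_mem (measurableSet_orthant d) fun x hx =>
            mul_nonneg (mul_nonneg hB (by linarith [norm1_nonneg x])) (alpha_nonneg r σm hx s i v)
        · refine ae_restrict_of_forall_mem (measurableSet_orthant d) fun x hx => ?_
          rw [← neg_mul]
          exact mul_le_mul_of_nonneg_right (hf x hx) (alpha_nonneg r σm hx s i v)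

lemma neg_le_jumpTerm (hr : ∀ i, 0 ≤ r i) (hσ : ∀ i, IsUnit (σm i).det)
    (hΛ1 : ∀ i j, i ≠ j → 0 ≤ Λ i j) (hΛ2 : ∀ i, ∑ j, Λ i j = 0) {M C : ℝ} (hM : 0 ≤ M)
    (hC : ∀ i, -Λ i i ≤ C) {n : ℕ}
    (ih : ∀ t ∈ Set.Ioo 0 T, ∀ s ∈ orthant d, ∀ j,
      -(M * (C * (T - t)) ^ n / n.factorial * (1 + norm1 s)) ≤ φ t s j)
    {t : ℝ} (ht : t ∈ Set.Ioo 0 T) {s : Fin d → ℝ} (hs : s ∈ orthant d) (i : Fin k)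
    {v : ℝ} (hv : v ∈ Set.Ioo 0 (T - t)) :
    -(C * (M * (C * (T - t - v)) ^ n / n.factorial) * (1 + norm1 s))
      ≤ exp (-((-Λ i i) + r i) * v) * ∑ j ∈ Finset.univ.filter (fun j => j ≠ i),
        Λ i j * ∫ x in orthant d, φ (t + v) x j * alpha r σm x s i v := by
  have hrate : 0 ≤ -Λ i i := neg_diag_nonneg hΛ1 hΛ2 i
  have hS : 0 ≤ 1 + norm1 s := by linarith [norm1_nonneg s]
  set B := M * (C * (T - t - v)) ^ n / n.factorial
  have hB : 0 ≤ B := by have := sub_pos.2 hv.2; have := hrate.trans (hC i); positivity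
  have hI : ∀ j, -(B * (exp (r i * v) * (1 + norm1 s)))
      ≤ ∫ x in orthant d, φ (t + v) x j * alpha r σm x s i v := fun j =>
    neg_le_setIntegral_mul_alpha (hr i) (hσ i) hv.1 hs hB fun x hx => by
      have := ih (t + v) ⟨by linarith [hv.1, ht.1], by linarith [hv.2]⟩ x hx j
      rwa [show T - (t + v) = T - t - v by ring] at this
  have hexp : exp (-((-Λ i i) + r i) * v) * exp (r i * v) = exp (-(-Λ i i) * v) := by
    rw [← exp_add]; ring_nf
  have hdecay : exp (-(-Λ i i) * v) * (-Λ i i) ≤ C :=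
    (mul_le_of_le_one_left hrate (exp_le_one_iff.2 (by nlinarith [hv.1]))).trans (hC i)
  calc -(C * B * (1 + norm1 s))
      ≤ -(exp (-(-Λ i i) * v) * (-Λ i i) * (B * (1 + norm1 s))) := by
        rw [mul_assoc C]
        exact neg_le_neg (mul_le_mul_of_nonneg_right hdecay (mul_nonneg hB hS))
    _ = exp (-((-Λ i i) + r i) * v) * -(-Λ i i * (B * (exp (r i * v) * (1 + norm1 s)))) := by
        rw [← hexp]; ring
    _ ≤ _ := mul_le_mul_of_nonneg_left (neg_mul_le_sum_offDiag_mul hΛ1 hΛ2 hI) (exp_nonneg _)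

lemma SolvesIE.neg_le_succ (hφIE : SolvesIE r σm Λ K T φ) (hr : ∀ i, 0 ≤ r i)
    (hσ : ∀ i, IsUnit (σm i).det) (hΛ1 : ∀ i j, i ≠ j → 0 ≤ Λ i j)
    (hΛ2 : ∀ i, ∑ j, Λ i j = 0) (hK0 : ∀ s ∈ orthant d, 0 ≤ K s) {M C : ℝ} (hM : 0 ≤ M)
    (hC : ∀ i, -Λ i i ≤ C) {n : ℕ}
    (ih : ∀ t ∈ Set.Ioo 0 T, ∀ s ∈ orthant d, ∀ j,
      -(M * (C * (T - t)) ^ n / n.factorial * (1 + norm1 s)) ≤ φ t s j)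
    {t : ℝ} (ht : t ∈ Set.Ioo 0 T) {s : Fin d → ℝ} (hs : s ∈ orthant d) (i : Fin k) :
    -(M * (C * (T - t)) ^ (n + 1) / (n + 1).factorial * (1 + norm1 s)) ≤ φ t s i := by
  have hC0 : 0 ≤ C := (neg_diag_nonneg hΛ1 hΛ2 i).trans (hC i)
  have hS : 0 ≤ 1 + norm1 s := by linarith [norm1_nonneg s]
  have hcont : Continuous fun v =>
      C * (M * (C * (T - t - v)) ^ n / n.factorial) * (1 + norm1 s) := by
    fun_prop
  have hjump := neg_intervalIntegral_le_intervalIntegral (sub_pos.2 ht.2).le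
    (hcont.intervalIntegrable _ _)
    (fun v hv => by have := sub_pos.2 hv.2; positivity)
    (fun v hv => neg_le_jumpTerm hr hσ hΛ1 hΛ2 hM hC ih ht hs i hv)
  rw [intervalIntegral.integral_mul_const, integral_mul_pow_sub_div_factorial] at hjump
  rw [hφIE t ht s hs i, Aop]
  linarith [mul_nonneg (exp_nonneg (-(-Λ i i) * (T - t))) (eta_nonneg r σm hK0 T i t hs)]

lemma SolvesIE.nonneg (hφIE : SolvesIE r σm Λ K T φ) (hφV : MemV T φ) (hr : ∀ i, 0 ≤ r i)
    (hσ : ∀ i, IsUnit (σm i).det) (hΛ1 : ∀ i j, i ≠ j → 0 ≤ Λ i j)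
    (hΛ2 : ∀ i, ∑ j, Λ i j = 0) (hK0 : ∀ s ∈ orthant d, 0 ≤ K s) :
    ∀ t ∈ Set.Ioo 0 T, ∀ s ∈ orthant d, ∀ i, 0 ≤ φ t s i := by
  obtain ⟨-, M, hM⟩ := hφV
  set C := ∑ i, -Λ i i
  have hC : ∀ i, -Λ i i ≤ C := fun i =>
    Finset.single_le_sum (fun j _ => neg_diag_nonneg hΛ1 hΛ2 j) (Finset.mem_univ i)
  have hbound : ∀ n : ℕ, ∀ t ∈ Set.Ioo 0 T, ∀ s ∈ orthant d, ∀ i,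
      -(|M| * (C * (T - t)) ^ n / n.factorial * (1 + norm1 s)) ≤ φ t s i := by
    intro n
    induction n with
    | zero =>
      intro t ht s hs i
      have hS : 0 ≤ 1 + norm1 s := by linarith [norm1_nonneg s]
      simpa using neg_le_of_abs_le ((hM t ht s hs i).trans
        (mul_le_mul_of_nonneg_right (le_abs_self M) hS))
    | succ n ih =>
      exact fun t ht s hs i => hφIE.neg_le_succ hr hσ hΛ1 hΛ2 hK0 (abs_nonneg M) hC ih ht hs i
  intro t ht s hs i
  have := (((FloorSemiring.tendsto_pow_div_factorial_atTop (C * (T - t))).const_mul |M|).mul_const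
    (1 + norm1 s)).neg
  simp only [mul_zero, zero_mul, neg_zero, ← mul_div_assoc] at this
  exact le_of_tendsto' this fun n => hbound n t ht s hs i

end IntegralEquation

theorem stmt_11_general (d k : ℕ)
    (r : Fin k → ℝ) (hr : ∀ i, 0 ≤ r i)
    (σm : Fin k → Matrix (Fin d) (Fin d) ℝ) (hσ : ∀ i, IsUnit (σm i).det)
    (Λ : Fin k → Fin k → ℝ) (hΛ1 : ∀ i j, i ≠ j → 0 ≤ Λ i j)
    (hΛ2 : ∀ i : Fin k, ∑ j, Λ i j = 0)
    (T : ℝ)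
    (K : (Fin d → ℝ) → ℝ) (hK0 : ∀ s ∈ orthant d, 0 ≤ K s)
    (φ : ℝ → (Fin d → ℝ) → Fin k → ℝ)
    (hφV : MemV T φ) (hφIE : SolvesIE r σm Λ K T φ) :
    (∀ t ∈ Set.Ioo (0:ℝ) T, ∀ s ∈ orthant d, ∀ i : Fin k, 0 ≤ φ t s i) ∧
    ∃ M : ℝ, ∀ t ∈ Set.Ioo (0:ℝ) T, ∀ s ∈ orthant d, ∀ i : Fin k,
      |φ t s i| ≤ M * (1 + norm1 s) :=
  ⟨hφIE.nonneg hφV hr hσ hΛ1 hΛ2 hK0, hφV.2⟩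

theorem stmt_11 (d k : ℕ) (hd : 1 ≤ d) (hk : 0 < k)
    (r : Fin k → ℝ) (hr : ∀ i, 0 ≤ r i)
    (σm : Fin k → Matrix (Fin d) (Fin d) ℝ) (hσ : ∀ i, IsUnit (σm i).det)
    (Λ : Fin k → Fin k → ℝ) (hΛ1 : ∀ i j, i ≠ j → 0 ≤ Λ i j)
    (hΛ2 : ∀ i : Fin k, ∑ j, Λ i j = 0)
    (T : ℝ) (hT : 0 < T)
    (K : (Fin d → ℝ) → ℝ) (hK0 : ∀ s ∈ orthant d, 0 ≤ K s)
    (c : NNReal) (hKlip : LipschitzOnWith c K (orthant d))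
    (φ : ℝ → (Fin d → ℝ) → Fin k → ℝ)
    (hφV : MemV T φ) (hφIE : SolvesIE r σm Λ K T φ) :
    (∀ t ∈ Set.Ioo (0:ℝ) T, ∀ s ∈ orthant d, ∀ i : Fin k, 0 ≤ φ t s i) ∧
    ∃ M : ℝ, ∀ t ∈ Set.Ioo (0:ℝ) T, ∀ s ∈ orthant d, ∀ i : Fin k,
      |φ t s i| ≤ M * (1 + norm1 s) :=
  stmt_11_general d k r hr σm hσ Λ hΛ1 hΛ2 T K hK0 φ hφV hφIE
end
end

section
/- Comparison principle: let U be an open subset of (0,∞)^d, and let f₁ and f₂ belong to C([0,T] × (cl(U) ∩ (0,∞)^d) × X) ∩ C^{1,2}((0,T) × U × X), each of at most linear growth in the space variable (sup |f_j(t,s,i)|/(1+‖s‖₁) < ∞). Assume ∂f₁/∂t + Lf₁ ≤ 0 and ∂f₂/∂t + Lf₂ ≥ 0 on (0,T) × U × X, and that f₁ ≥ f₂ at t = T and on (0,T) × (∂U ∩ (0,∞)^d) × X. Then f₁ ≥ f₂ on (0,T) × U × X. -/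
open MeasureTheory Real Filter Matrix

noncomputable section

/-- The spatial operator `𝕃`. -/
def Lop {d k : ℕ} (r : Fin k → ℝ) (σm : Fin k → Matrix (Fin d) (Fin d) ℝ)
    (Λ : Fin k → Fin k → ℝ) (φ : ℝ → (Fin d → ℝ) → Fin k → ℝ)
    (t : ℝ) (s : Fin d → ℝ) (i : Fin k) : ℝ :=
  r i * ∑ l, s l * pd l (fun s' => φ t s' i) s
  + (1/2 : ℝ) * ∑ l, ∑ l',
      amat σm i l l' * s l * s l' * pd l (pd l' (fun s' => φ t s' i)) s
  - r i * φ t s i + ∑ j, Λ i j * φ t s j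

/-- `f` is of class `C^{1,2}` on `(0,T) × U × X`. -/
def C12On {d k : ℕ} (T : ℝ) (U : Set (Fin d → ℝ))
    (f : ℝ → (Fin d → ℝ) → Fin k → ℝ) : Prop :=
  ∀ i : Fin k,
    (∀ t ∈ Set.Ioo (0:ℝ) T, ∀ s ∈ U,
      DifferentiableAt ℝ (fun t' => f t' s i) t ∧
      (∀ l, DifferentiableAt ℝ (fun c => f t (Function.update s l c) i) (s l)) ∧
      (∀ l l', DifferentiableAt ℝ
          (fun c => pd l' (fun s' => f t s' i) (Function.update s l c)) (s l))) ∧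
    ContinuousOn (fun p : ℝ × (Fin d → ℝ) => deriv (fun t' => f t' p.2 i) p.1)
      (Set.Ioo 0 T ×ˢ U) ∧
    (∀ l : Fin d, ContinuousOn
        (fun p : ℝ × (Fin d → ℝ) => pd l (fun s' => f p.1 s' i) p.2)
        (Set.Ioo 0 T ×ˢ U)) ∧
    (∀ l l' : Fin d, ContinuousOn
        (fun p : ℝ × (Fin d → ℝ) => pd l (pd l' (fun s' => f p.1 s' i)) p.2)
        (Set.Ioo 0 T ×ˢ U))

/-!
Fix `ε > 0` and a large `K`, and penalize the difference as
`w = f₁ - f₂ + ε e^{K(T-t)} B(s)` with the barrier `B(s) = 1 + ∑ₗ (sₗ² + sₗ⁻²)`.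
Since `B` grows quadratically at infinity and blows up at the boundary of the orthant, it beats
the linear growth of `f₁, f₂` outside a compact box, so `w` attains its minimum over
`[t₀, T] × (cl U ∩ box) × X`. If that minimum were negative it could not sit at `t = T`, on `∂U`
or on the boundary of the box. At any other point `∂ₜw ≥ 0`, `∇ₛw = 0` and the Hessian of `w` is
positive semidefinite, hence so is its pairing with `a = σσᵀ`; together with minimality over
the regimes (`Λ` is a rate matrix) and `r ≥ 0` this gives
`∂ₜ(f₁ - f₂) + L f₁ - L f₂ ≥ (K - 2r - 3 tr a) ε e^{K(T-t)} B > 0`, contradicting the sub- and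
supersolution inequalities. So `w ≥ 0`, and `ε → 0` gives `f₂ ≤ f₁`.
-/

open Function Topology Asymptotics

section CoordinateCalculus

variable {d : ℕ}

lemma abs_sub_sub_sum_le_of_hasDerivAt_update {g : (Fin d → ℝ) → ℝ}
    {D : Fin d → (Fin d → ℝ) → ℝ} {x h : Fin d → ℝ} {δ ε : ℝ}
    (hD : ∀ y ∈ Set.univ.pi fun l => Metric.ball (x l) δ, ∀ l,
      HasDerivAt (fun c => g (update y l c)) (D l y) (y l))
    (hDx : ∀ y ∈ Set.univ.pi fun l => Metric.ball (x l) δ, ∀ l, |D l y - D l x| ≤ ε)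
    (hh : ∀ l, |h l| < δ) (S : Finset (Fin d)) :
    |g (fun l => if l ∈ S then x l + h l else x l) - g x - ∑ l ∈ S, D l x * h l|
      ≤ ε * ∑ l ∈ S, |h l| := by
  classical
  induction S using Finset.induction_on with
  | empty => simp
  | insert a S ha ih =>
    set y : Fin d → ℝ := fun l => if l ∈ S then x l + h l else x l
    have hya : y a = x a := if_neg ha
    have hy : ∀ c ∈ Metric.ball (x a) δ,
        update y a c ∈ Set.univ.pi fun l => Metric.ball (x l) δ := by
      intro c hc l _
      rcases eq_or_ne l a with rfl | hla
      · simpa using hc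
      · simp only [update_of_ne hla, y, Metric.mem_ball, Real.dist_eq]
        split_ifs <;> simp [hh l, (abs_nonneg (h l)).trans_lt (hh l)]
    have hstep : |g (update y a (x a + h a)) - g y - D a x * h a| ≤ ε * |h a| := by
      have hderiv : ∀ c ∈ Metric.ball (x a) δ, HasDerivWithinAt
          (fun c => g (update y a c) - D a x * c) (D a (update y a c) - D a x)
          (Metric.ball (x a) δ) c := by
        intro c hc
        have hg : HasDerivAt (fun c => g (update y a c)) (D a (update y a c)) c := by
          simpa [update_idem] using hD _ (hy c hc) a
        have := hg.sub ((hasDerivAt_id' c).const_mul (D a x))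
        rw [mul_one] at this
        exact this.hasDerivWithinAt
      have hmvt := (convex_ball (x a) δ).norm_image_sub_le_of_norm_hasDerivWithin_le hderiv
        (fun c hc => by simpa using hDx _ (hy c hc) a)
        (Metric.mem_ball_self ((abs_nonneg (h a)).trans_lt (hh a)))
        (show x a + h a ∈ Metric.ball (x a) δ by simpa [Real.dist_eq] using hh a)
      rw [← hya, update_eq_self] at hmvt
      rw [Real.norm_eq_abs, Real.norm_eq_abs, hya, add_sub_cancel_left] at hmvt
      convert hmvt using 2
      ring
    have hnew : (fun l => if l ∈ insert a S then x l + h l else x l) = update y a (x a + h a) := by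
      funext l
      rcases eq_or_ne l a with rfl | hla
      · simp
      · simp [y, hla]
    rw [hnew, Finset.sum_insert ha, Finset.sum_insert ha, mul_add]
    calc _ = |(g (update y a (x a + h a)) - g y - D a x * h a)
          + (g y - g x - ∑ l ∈ S, D l x * h l)| := by ring_nf
      _ ≤ _ := (abs_add_le _ _).trans (add_le_add hstep ih)

lemma hasFDerivAt_of_hasDerivAt_update {g : (Fin d → ℝ) → ℝ}
    {D : Fin d → (Fin d → ℝ) → ℝ} {V : Set (Fin d → ℝ)} {x : Fin d → ℝ} (hV : V ∈ 𝓝 x)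
    (hD : ∀ y ∈ V, ∀ l, HasDerivAt (fun c => g (update y l c)) (D l y) (y l))
    (hDc : ∀ l, ContinuousAt (D l) x) :
    HasFDerivAt g (∑ l, D l x • ContinuousLinearMap.proj (R := ℝ) (φ := fun _ => ℝ) l) x := by
  rw [hasFDerivAt_iff_isLittleO_nhds_zero]
  have hsum : (fun h : Fin d → ℝ => ∑ l, |h l|) =O[𝓝 0] fun h => h := by
    refine IsBigO.of_bound d (Eventually.of_forall fun h => ?_)
    rw [Real.norm_of_nonneg (Finset.sum_nonneg fun l _ => abs_nonneg _)]
    simpa using Finset.sum_le_card_nsmul Finset.univ (fun l => |h l|) ‖h‖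
      fun l _ => norm_le_pi_norm h l
  refine IsLittleO.trans_isBigO ?_ hsum
  rw [isLittleO_iff]
  intro ε hε
  have hnear : ∀ᶠ y in 𝓝 x, y ∈ V ∧ ∀ l, |D l y - D l x| ≤ ε :=
    (Filter.inter_mem hV (Filter.eventually_all.2 fun l =>
      (hDc l).eventually (Metric.closedBall_mem_nhds _ hε)))
  obtain ⟨δ, hδ, hball⟩ := Metric.eventually_nhds_iff_ball.1 hnear
  filter_upwards [Metric.ball_mem_nhds 0 hδ] with h hh
  rw [ball_pi x hδ] at hball
  have hh' : ∀ l, |h l| < δ := by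
    simpa [← dist_zero_right, ball_pi _ hδ, Real.dist_eq] using hh
  have := abs_sub_sub_sum_le_of_hasDerivAt_update (fun y hy => hD y (hball y hy).1)
    (fun y hy => (hball y hy).2) hh' Finset.univ
  simpa [Real.norm_of_nonneg (Finset.sum_nonneg fun l _ => abs_nonneg (h l)), mul_comm,
    ← Pi.add_def] using this

lemma hasDerivAt_comp_add_smul_of_hasDerivAt_update {g : (Fin d → ℝ) → ℝ}
    {D : Fin d → (Fin d → ℝ) → ℝ} {V : Set (Fin d → ℝ)} (hV : IsOpen V)
    (hD : ∀ y ∈ V, ∀ l, HasDerivAt (fun c => g (update y l c)) (D l y) (y l))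
    (hDc : ∀ l, ContinuousOn (D l) V) {x v : Fin d → ℝ} {u : ℝ} (hu : x + u • v ∈ V) :
    HasDerivAt (fun u => g (x + u • v)) (∑ l, v l * D l (x + u • v)) u := by
  have hg := hasFDerivAt_of_hasDerivAt_update (hV.mem_nhds hu) hD
    fun l => (hDc l).continuousAt (hV.mem_nhds hu)
  have hline : HasDerivAt (fun u : ℝ => x + u • v) v u := by
    simpa using ((hasDerivAt_id u).smul_const v).const_add x
  have := hg.comp_hasDerivAt u hline
  simp only [FunLike.coe_sum, FunLike.coe_smul, Finset.sum_apply,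
    Pi.smul_apply, ContinuousLinearMap.proj_apply, smul_eq_mul, mul_comm (D _ _)] at this
  exact this

lemma IsLocalMin.eq_zero_of_hasDerivAt_update {g : (Fin d → ℝ) → ℝ} {x : Fin d → ℝ}
    {l : Fin d} {a : ℝ} (hmin : IsLocalMin g x)
    (hg : HasDerivAt (fun c => g (update x l c)) a (x l)) : a = 0 := by
  have hcomp : IsLocalMin (fun c => g (update x l c)) (x l) := by
    refine IsLocalMin.comp_continuous (f := g) ?_
      (continuous_const.update l continuous_id).continuousAt
    simpa using hmin
  exact hcomp.hasDerivAt_eq_zero hg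

lemma IsLocalMin.nonneg_of_hasDerivAt_of_hasDerivAt {ψ ψ' : ℝ → ℝ} {a c : ℝ}
    (hmin : IsLocalMin ψ a) (hψ : ∀ᶠ u in 𝓝 a, HasDerivAt ψ (ψ' u) u)
    (hψ' : HasDerivAt ψ' c a) : 0 ≤ c := by
  by_contra! hc
  have hderiv : deriv ψ =ᶠ[𝓝 a] ψ' := hψ.mono fun u hu => hu.deriv
  have hc' : deriv (deriv ψ) a = c := by rw [hderiv.deriv_eq]; exact hψ'.deriv
  have hmax : IsLocalMax ψ a := isLocalMax_of_deriv_deriv_neg (hc' ▸ hc)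
    (hderiv.eq_of_nhds.trans (hmin.hasDerivAt_eq_zero hψ.self_of_nhds))
    hψ.self_of_nhds.continuousAt
  -- a local minimum that is also a local maximum is locally constant
  have hconst : ψ =ᶠ[𝓝 a] fun _ => ψ a :=
    (hmin.and hmax).mono fun u hu => le_antisymm hu.2 hu.1
  have : deriv (deriv ψ) a = 0 := by simp [hconst.deriv.deriv_eq]
  linarith

/-- `D l` and `D2 l l'` are continuous first and second partial derivatives of `g` on `V`, taken
one coordinate at a time as in `pd`; `D2 l l'` is the derivative of `D l'` in the `l`-th
coordinate. -/
structure HasC2PartialsOn (g : (Fin d → ℝ) → ℝ) (D : Fin d → (Fin d → ℝ) → ℝ)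
    (D2 : Fin d → Fin d → (Fin d → ℝ) → ℝ) (V : Set (Fin d → ℝ)) : Prop where
  hasDerivAt : ∀ y ∈ V, ∀ l, HasDerivAt (fun c => g (update y l c)) (D l y) (y l)
  hasDerivAt₂ : ∀ y ∈ V, ∀ l l', HasDerivAt (fun c => D l' (update y l c)) (D2 l l' y) (y l)
  continuousOn : ∀ l, ContinuousOn (D l) V
  continuousOn₂ : ∀ l l', ContinuousOn (D2 l l') V

namespace HasC2PartialsOn

variable {g g' : (Fin d → ℝ) → ℝ} {D D' : Fin d → (Fin d → ℝ) → ℝ}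
  {D2 D2' : Fin d → Fin d → (Fin d → ℝ) → ℝ} {V : Set (Fin d → ℝ)}

lemma add (h : HasC2PartialsOn g D D2 V) (h' : HasC2PartialsOn g' D' D2' V) :
    HasC2PartialsOn (fun y => g y + g' y) (fun l y => D l y + D' l y)
      (fun l l' y => D2 l l' y + D2' l l' y) V where
  hasDerivAt y hy l := (h.hasDerivAt y hy l).add (h'.hasDerivAt y hy l)
  hasDerivAt₂ y hy l l' := (h.hasDerivAt₂ y hy l l').add (h'.hasDerivAt₂ y hy l l')
  continuousOn l := (h.continuousOn l).add (h'.continuousOn l)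
  continuousOn₂ l l' := (h.continuousOn₂ l l').add (h'.continuousOn₂ l l')

lemma sub (h : HasC2PartialsOn g D D2 V) (h' : HasC2PartialsOn g' D' D2' V) :
    HasC2PartialsOn (fun y => g y - g' y) (fun l y => D l y - D' l y)
      (fun l l' y => D2 l l' y - D2' l l' y) V where
  hasDerivAt y hy l := (h.hasDerivAt y hy l).sub (h'.hasDerivAt y hy l)
  hasDerivAt₂ y hy l l' := (h.hasDerivAt₂ y hy l l').sub (h'.hasDerivAt₂ y hy l l')
  continuousOn l := (h.continuousOn l).sub (h'.continuousOn l)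
  continuousOn₂ l l' := (h.continuousOn₂ l l').sub (h'.continuousOn₂ l l')

lemma const_mul (h : HasC2PartialsOn g D D2 V) (a : ℝ) :
    HasC2PartialsOn (fun y => a * g y) (fun l y => a * D l y) (fun l l' y => a * D2 l l' y) V where
  hasDerivAt y hy l := (h.hasDerivAt y hy l).const_mul a
  hasDerivAt₂ y hy l l' := (h.hasDerivAt₂ y hy l l').const_mul a
  continuousOn l := continuousOn_const.mul (h.continuousOn l)
  continuousOn₂ l l' := continuousOn_const.mul (h.continuousOn₂ l l')

lemma sum_mul_mul_nonneg_of_isLocalMin (h : HasC2PartialsOn g D D2 V) (hV : IsOpen V)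
    {x : Fin d → ℝ} (hx : x ∈ V) (hmin : IsLocalMin g x) (v : Fin d → ℝ) :
    0 ≤ ∑ l, ∑ l', v l * v l' * D2 l l' x := by
  have hline : Tendsto (fun u : ℝ => x + u • v) (𝓝 0) (𝓝 x) :=
    (continuous_const.add (continuous_id.smul continuous_const)).tendsto' _ _ (by simp)
  have hnear : ∀ᶠ u in 𝓝 (0 : ℝ), x + u • v ∈ V := hline.eventually (hV.mem_nhds hx)
  have hψ : ∀ᶠ u in 𝓝 (0 : ℝ), HasDerivAt (fun u => g (x + u • v))
      (∑ l', v l' * D l' (x + u • v)) u :=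
    hnear.mono fun u hu =>
      hasDerivAt_comp_add_smul_of_hasDerivAt_update hV h.hasDerivAt h.continuousOn hu
  have hψ' : HasDerivAt (fun u : ℝ => ∑ l', v l' * D l' (x + u • v))
      (∑ l', v l' * ∑ l, v l * D2 l l' x) 0 := by
    refine HasDerivAt.fun_sum fun l' _ => HasDerivAt.const_mul _ ?_
    simpa using hasDerivAt_comp_add_smul_of_hasDerivAt_update (u := 0) hV
      (fun y hy l => h.hasDerivAt₂ y hy l l') (fun l => h.continuousOn₂ l l') (by simpa using hx)
  have hmin' : IsLocalMin (fun u : ℝ => g (x + u • v)) 0 := by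
    simpa [IsLocalMin, IsMinFilter] using hline.eventually hmin
  calc 0 ≤ ∑ l', v l' * ∑ l, v l * D2 l l' x := hmin'.nonneg_of_hasDerivAt_of_hasDerivAt hψ hψ'
    _ = ∑ l, ∑ l', v l * v l' * D2 l l' x := by
      simp only [Finset.mul_sum]
      rw [Finset.sum_comm]
      exact Finset.sum_congr rfl fun l _ => Finset.sum_congr rfl fun l' _ => by ring

end HasC2PartialsOn
end CoordinateCalculus

section Barrier

variable {d : ℕ}

def barrier (s : Fin d → ℝ) : ℝ := 1 + ∑ l, (s l ^ 2 + (s l ^ 2)⁻¹)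

lemma sq_add_inv_sq_le_barrier (s : Fin d → ℝ) (l : Fin d) :
    s l ^ 2 + (s l ^ 2)⁻¹ ≤ barrier s := by
  have := Finset.single_le_sum (f := fun l => s l ^ 2 + (s l ^ 2)⁻¹)
    (fun l _ => by positivity) (Finset.mem_univ l)
  simp only [barrier]
  linarith

lemma one_le_barrier (s : Fin d → ℝ) : 1 ≤ barrier s :=
  le_add_of_nonneg_right (Finset.sum_nonneg fun l _ => by positivity)

lemma mem_Ioo_of_barrier_lt_sq {s : Fin d → ℝ} {R : ℝ} (hR : 0 < R) (hs : barrier s < R ^ 2)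
    (l : Fin d) (hl : 0 < s l) : s l ∈ Set.Ioo R⁻¹ R := by
  have hle := sq_add_inv_sq_le_barrier s l
  have hsq : s l ^ 2 < R ^ 2 := by linarith [inv_nonneg.2 (sq_nonneg (s l))]
  have hinv : (s l ^ 2)⁻¹ < R ^ 2 := by linarith [sq_nonneg (s l)]
  refine ⟨?_, (pow_lt_pow_iff_left₀ hl.le hR.le two_ne_zero).1 hsq⟩
  rw [inv_lt_comm₀ (sq_pos_of_pos hl) (by positivity), ← inv_pow] at hinv
  exact (pow_lt_pow_iff_left₀ (by positivity) hl.le two_ne_zero).1 hinv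

lemma hasDerivAt_barrier_update (s : Fin d → ℝ) (l : Fin d) {c : ℝ} (hc : c ≠ 0) :
    HasDerivAt (fun c => barrier (update s l c)) (2 * c - 2 / c ^ 3) c := by
  classical
  set S := ∑ m ∈ Finset.univ \ {l}, (s m ^ 2 + (s m ^ 2)⁻¹)
  have hsplit : ∀ c : ℝ, barrier (update s l c) = 1 + ((c ^ 2 + (c ^ 2)⁻¹) + S) := by
    intro c
    rw [barrier, ← Finset.sum_update_of_mem (Finset.mem_univ l)]
    exact congrArg _ (Finset.sum_congr rfl fun m _ =>
      apply_update (fun _ x => x ^ 2 + (x ^ 2)⁻¹) s l c m)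
  simp only [hsplit]
  have hsq := hasDerivAt_pow 2 c
  refine (((hsq.add (hsq.inv (pow_ne_zero 2 hc))).add_const S).const_add 1).congr_deriv ?_
  field_simp
  ring

lemma hasDerivAt_barrier_grad {c : ℝ} (hc : c ≠ 0) :
    HasDerivAt (fun c : ℝ => 2 * c - 2 / c ^ 3) (2 + 6 / c ^ 4) c := by
  refine (((hasDerivAt_id c).const_mul 2).sub ((hasDerivAt_const c 2).div
    (hasDerivAt_pow 3 c) (pow_ne_zero 3 hc))).congr_deriv ?_
  field_simp
  ring

lemma hasC2PartialsOn_barrier {V : Set (Fin d → ℝ)} (hV : V ⊆ orthant d) :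
    HasC2PartialsOn barrier (fun l s => 2 * s l - 2 / s l ^ 3)
      (fun l l' s => if l = l' then 2 + 6 / s l ^ 4 else 0) V where
  hasDerivAt y hy l := hasDerivAt_barrier_update y l (hV hy l trivial).ne'
  hasDerivAt₂ y hy l l' := by
    rcases eq_or_ne l l' with rfl | hll
    · simpa using hasDerivAt_barrier_grad (hV hy l trivial).ne'
    · simpa [update_of_ne hll.symm, hll] using hasDerivAt_const (y l) _
  continuousOn l := by
    refine ContinuousOn.sub (by fun_prop) (continuousOn_const.div (by fun_prop) ?_)
    exact fun y hy => pow_ne_zero 3 (hV hy l trivial).ne'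
  continuousOn₂ l l' := by
    split_ifs
    · refine continuousOn_const.add (continuousOn_const.div (by fun_prop) ?_)
      exact fun y hy => pow_ne_zero 4 (hV hy l trivial).ne'
    · exact continuousOn_const

lemma sum_mul_barrier_grad_le (s : Fin d → ℝ) :
    ∑ l, s l * (2 * s l - 2 / s l ^ 3) ≤ 2 * barrier s := by
  have hterm : ∀ c : ℝ, c * (2 * c - 2 / c ^ 3) ≤ 2 * (c ^ 2 + (c ^ 2)⁻¹) := by
    intro c
    rcases eq_or_ne c 0 with rfl | hc
    · simp
    · rw [show c * (2 * c - 2 / c ^ 3) = 2 * c ^ 2 - 2 * (c ^ 2)⁻¹ by field_simp]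
      linarith [inv_nonneg.2 (sq_nonneg c)]
  calc _ ≤ ∑ l, 2 * (s l ^ 2 + (s l ^ 2)⁻¹) := Finset.sum_le_sum fun l _ => hterm (s l)
    _ ≤ 2 * barrier s := by rw [← Finset.mul_sum, barrier]; linarith

lemma sum_mul_barrier_hess_le (a : Matrix (Fin d) (Fin d) ℝ) (ha : ∀ l, 0 ≤ a l l)
    (s : Fin d → ℝ) :
    ∑ l, ∑ l', a l l' * s l * s l' * (if l = l' then 2 + 6 / s l ^ 4 else 0)
      ≤ 6 * a.trace * barrier s := by
  have hterm : ∀ c : ℝ, c * c * (2 + 6 / c ^ 4) ≤ 6 * (c ^ 2 + (c ^ 2)⁻¹) := by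
    intro c
    rcases eq_or_ne c 0 with rfl | hc
    · simp
    · rw [show c * c * (2 + 6 / c ^ 4) = 2 * c ^ 2 + 6 * (c ^ 2)⁻¹ by field_simp]
      linarith [sq_nonneg c]
  simp only [mul_ite, mul_zero, Finset.sum_ite_eq, Finset.mem_univ, if_true]
  calc _ ≤ ∑ l, a l l * (6 * barrier s) := Finset.sum_le_sum fun l _ => by
        rw [mul_assoc, mul_assoc]
        exact mul_le_mul_of_nonneg_left
          (by linarith [hterm (s l), sq_add_inv_sq_le_barrier s l]) (ha l)
    _ = 6 * a.trace * barrier s := by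
      rw [← Finset.sum_mul, Matrix.trace]
      simp only [Matrix.diag_apply]
      ring

lemma continuousOn_barrier : ContinuousOn barrier (orthant d) := by
  refine continuousOn_const.add (continuousOn_finsetSum _ fun l _ => ?_)
  refine ContinuousOn.add (by fun_prop) (ContinuousOn.inv₀ (by fun_prop) ?_)
  exact fun s hs => pow_ne_zero 2 (hs l trivial).ne'

end Barrier

lemma sum_mul_nonneg_of_forall_le {ι : Type*} [Fintype ι] {q x : ι → ℝ} {i : ι}
    (hq : ∀ j, i ≠ j → 0 ≤ q j) (hsum : ∑ j, q j = 0) (hx : ∀ j, x i ≤ x j) :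
    0 ≤ ∑ j, q j * x j := by
  have hshift : ∑ j, q j * x j = ∑ j, q j * (x j - x i) := by
    simp only [mul_sub, Finset.sum_sub_distrib, ← Finset.sum_mul, hsum, zero_mul, sub_zero]
  rw [hshift]
  refine Finset.sum_nonneg fun j _ => ?_
  rcases eq_or_ne i j with rfl | hij
  · simp
  · exact mul_nonneg (hq j hij) (sub_nonneg.2 (hx j))

lemma mul_transpose_diag_nonneg {d : ℕ} {ι : Type*} [Fintype ι] (σ : Matrix (Fin d) ι ℝ)
    (l : Fin d) : 0 ≤ (σ * σᵀ) l l :=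
  Finset.sum_nonneg fun m _ => mul_self_nonneg (σ l m)

/-- Schur's product theorem for `σ * σᵀ` and a positive semidefinite `X`, tested on `c`. -/
lemma sum_mul_transpose_mul_nonneg {d : ℕ} {ι : Type*} [Fintype ι] (σ : Matrix (Fin d) ι ℝ)
    (c : Fin d → ℝ) {X : Fin d → Fin d → ℝ}
    (hX : ∀ v : Fin d → ℝ, 0 ≤ ∑ l, ∑ l', v l * v l' * X l l') :
    0 ≤ ∑ l, ∑ l', (σ * σᵀ) l l' * c l * c l' * X l l' := by
  calc 0 ≤ ∑ m, ∑ l, ∑ l', (σ l m * c l) * (σ l' m * c l') * X l l' :=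
        Finset.sum_nonneg fun m _ => hX _
    _ = _ := by
      simp only [Matrix.mul_apply, Matrix.transpose_apply, Finset.sum_mul]
      rw [Finset.sum_comm]
      refine Finset.sum_congr rfl fun l _ => ?_
      rw [Finset.sum_comm]
      exact Finset.sum_congr rfl fun l' _ => Finset.sum_congr rfl fun m _ => by ring

lemma IsCompact.exists_forall_le_fintype {α ι : Type*} [TopologicalSpace α] [Fintype ι]
    [Nonempty ι] {D : Set α} (hD : IsCompact D) (hne : D.Nonempty) {F : ι → α → ℝ}
    (hF : ∀ i, ContinuousOn (F i) D) : ∃ i, ∃ p ∈ D, ∀ j, ∀ q ∈ D, F i p ≤ F j q := by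
  choose p hpD hpmin using fun i => hD.exists_isMinOn hne (hF i)
  obtain ⟨i, -, hi⟩ := Finset.univ.exists_min_image (fun i => F i (p i)) Finset.univ_nonempty
  exact ⟨i, p i, hpD i, fun j q hq => (hi j (Finset.mem_univ j)).trans (hpmin j hq)⟩

section Comparison

variable {d k : ℕ} {r : Fin k → ℝ} {σm : Fin k → Matrix (Fin d) (Fin d) ℝ}
  {Λ : Fin k → Fin k → ℝ} {T : ℝ} {U : Set (Fin d → ℝ)}
  {f f₁ f₂ : ℝ → (Fin d → ℝ) → Fin k → ℝ}

lemma C12On.hasC2PartialsOn (hf : C12On T U f) {t : ℝ} (ht : t ∈ Set.Ioo 0 T) (i : Fin k) :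
    HasC2PartialsOn (fun s => f t s i) (fun l => pd l fun s => f t s i)
      (fun l l' => pd l (pd l' fun s => f t s i)) U where
  hasDerivAt y hy l := (((hf i).1 t ht y hy).2.1 l).hasDerivAt
  hasDerivAt₂ y hy l l' := (((hf i).1 t ht y hy).2.2 l l').hasDerivAt
  continuousOn l := ((hf i).2.2.1 l).comp (Continuous.prodMk_right t).continuousOn
    fun _ hy => ⟨ht, hy⟩
  continuousOn₂ l l' := ((hf i).2.2.2 l l').comp (Continuous.prodMk_right t).continuousOn
    fun _ hy => ⟨ht, hy⟩

/-- `hgrad` and `hhess` are the first- and second-order conditions at a spatial minimum of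
`f₁ - f₂ + c * barrier`, with the partial derivatives of `barrier` written out. -/
lemma neg_mul_barrier_le_Lop_sub_Lop {t : ℝ} {s : Fin d → ℝ} {i : Fin k} {c : ℝ}
    (hr : 0 ≤ r i) (hΛ1 : ∀ j, i ≠ j → 0 ≤ Λ i j) (hΛ2 : ∑ j, Λ i j = 0) (hc : 0 ≤ c)
    (hneg : f₁ t s i - f₂ t s i ≤ 0)
    (hmin : ∀ j, f₁ t s i - f₂ t s i ≤ f₁ t s j - f₂ t s j)
    (hgrad : ∀ l, pd l (fun s' => f₁ t s' i) s - pd l (fun s' => f₂ t s' i) s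
      + c * (2 * s l - 2 / s l ^ 3) = 0)
    (hhess : 0 ≤ ∑ l, ∑ l', amat σm i l l' * s l * s l' *
      (pd l (pd l' fun s' => f₁ t s' i) s - pd l (pd l' fun s' => f₂ t s' i) s
        + c * if l = l' then 2 + 6 / s l ^ 4 else 0)) :
    -((2 * r i + 3 * (amat σm i).trace) * (c * barrier s))
      ≤ Lop r σm Λ f₁ t s i - Lop r σm Λ f₂ t s i := by
  have hdrift : ∑ l, s l * pd l (fun s' => f₁ t s' i) s - ∑ l, s l * pd l (fun s' => f₂ t s' i) s
      = -(c * ∑ l, s l * (2 * s l - 2 / s l ^ 3)) := by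
    rw [← Finset.sum_sub_distrib, Finset.mul_sum, ← Finset.sum_neg_distrib]
    exact Finset.sum_congr rfl fun l _ => by linear_combination s l * hgrad l
  have hdiff : 0 ≤ ∑ l, ∑ l', amat σm i l l' * s l * s l' * pd l (pd l' fun s' => f₁ t s' i) s
      - ∑ l, ∑ l', amat σm i l l' * s l * s l' * pd l (pd l' fun s' => f₂ t s' i) s
      + c * ∑ l, ∑ l', amat σm i l l' * s l * s l' * (if l = l' then 2 + 6 / s l ^ 4 else 0) := by
    convert hhess using 1
    simp only [Finset.mul_sum, ← Finset.sum_sub_distrib, ← Finset.sum_add_distrib]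
    exact Finset.sum_congr rfl fun l _ => Finset.sum_congr rfl fun l' _ => by ring
  have hjump : 0 ≤ ∑ j, Λ i j * f₁ t s j - ∑ j, Λ i j * f₂ t s j := by
    rw [← Finset.sum_sub_distrib]
    simpa only [mul_sub] using
      sum_mul_nonneg_of_forall_le (x := fun j => f₁ t s j - f₂ t s j) hΛ1 hΛ2 hmin
  have hgradB := mul_le_mul_of_nonneg_left (sum_mul_barrier_grad_le s) (mul_nonneg hr hc)
  have hhessB := mul_le_mul_of_nonneg_left
    (sum_mul_barrier_hess_le (amat σm i) (mul_transpose_diag_nonneg (σm i)) s) hc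
  have hdisc := mul_nonpos_of_nonneg_of_nonpos hr hneg
  have hdrift' := congrArg (r i * ·) hdrift
  simp only [Lop]
  linarith

lemma nonneg_of_isMinOn_Icc_of_hasDerivAt {φ : ℝ → ℝ} {a b c : ℝ} (hab : a < b)
    (hmin : IsMinOn φ (Set.Icc a b) a) (hφ : HasDerivAt φ c a) : 0 ≤ c := by
  have hcone : b - a ∈ posTangentConeAt (Set.Icc a b) a :=
    sub_mem_posTangentConeAt_of_segment_subset (segment_eq_Icc hab.le).subset
  have := hmin.localize.hasFDerivWithinAt_nonneg hφ.hasFDerivAt.hasFDerivWithinAt hcone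
  simp only [ContinuousLinearMap.toSpanSingleton_apply, smul_eq_mul] at this
  exact nonneg_of_mul_nonneg_right (by linarith) (sub_pos.2 hab)

def penalized (f₁ f₂ : ℝ → (Fin d → ℝ) → Fin k → ℝ) (ε K T t : ℝ) (s : Fin d → ℝ)
    (i : Fin k) : ℝ :=
  f₁ t s i - f₂ t s i + ε * exp (K * (T - t)) * barrier s

lemma hasDerivAt_penalized_time {ε K t : ℝ} {s : Fin d → ℝ} {i : Fin k}
    (h₁ : DifferentiableAt ℝ (fun t' => f₁ t' s i) t)
    (h₂ : DifferentiableAt ℝ (fun t' => f₂ t' s i) t) :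
    HasDerivAt (fun t' => penalized f₁ f₂ ε K T t' s i)
      (deriv (fun t' => f₁ t' s i) t - deriv (fun t' => f₂ t' s i) t
        - K * (ε * exp (K * (T - t)) * barrier s)) t := by
  have hexp : HasDerivAt (fun t' => exp (K * (T - t'))) (exp (K * (T - t)) * (K * (0 - 1))) t :=
    (((hasDerivAt_const t T).sub (hasDerivAt_id t)).const_mul K).exp
  refine ((h₁.hasDerivAt.sub h₂.hasDerivAt).add
    ((hexp.const_mul ε).mul_const (barrier s))).congr_deriv ?_
  ring

lemma penalized_nonneg_of_interior_isMin {ε K t : ℝ} {s : Fin d → ℝ} {i : Fin k}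
    (hr : 0 ≤ r i) (hΛ1 : ∀ j, i ≠ j → 0 ≤ Λ i j) (hΛ2 : ∑ j, Λ i j = 0)
    (hU : IsOpen U) (hUsub : U ⊆ orthant d) (hC12₁ : C12On T U f₁) (hC12₂ : C12On T U f₂)
    (hε : 0 < ε) (hK : 2 * r i + 3 * (amat σm i).trace < K) (ht : t ∈ Set.Ioo 0 T) (hs : s ∈ U)
    (hsub : deriv (fun t' => f₁ t' s i) t + Lop r σm Λ f₁ t s i ≤ 0)
    (hsup : 0 ≤ deriv (fun t' => f₂ t' s i) t + Lop r σm Λ f₂ t s i)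
    (htime : IsMinOn (fun t' => penalized f₁ f₂ ε K T t' s i) (Set.Icc t T) t)
    (hspace : IsLocalMin (fun s' => penalized f₁ f₂ ε K T t s' i) s)
    (hregime : ∀ j, penalized f₁ f₂ ε K T t s i ≤ penalized f₁ f₂ ε K T t s j) :
    0 ≤ penalized f₁ f₂ ε K T t s i := by
  by_contra! hneg
  set c := ε * exp (K * (T - t))
  have hc : 0 < c := by positivity
  have hcB : 0 < c * barrier s := mul_pos hc (zero_lt_one.trans_le (one_le_barrier s))
  have hpartials : HasC2PartialsOn (fun s' => penalized f₁ f₂ ε K T t s' i) _ _ U :=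
    ((hC12₁.hasC2PartialsOn ht i).sub (hC12₂.hasC2PartialsOn ht i)).add
      ((hasC2PartialsOn_barrier hUsub).const_mul c)
  have hgen := neg_mul_barrier_le_Lop_sub_Lop (σm := σm) hr hΛ1 hΛ2 hc.le
    (by simp only [penalized] at hneg; linarith)
    (fun j => by have := hregime j; simp only [penalized] at this; linarith)
    (fun l => hspace.eq_zero_of_hasDerivAt_update (hpartials.hasDerivAt s hs l))
    (sum_mul_transpose_mul_nonneg (σm i) s
      (hpartials.sum_mul_mul_nonneg_of_isLocalMin hU hs hspace))
  have hdt := nonneg_of_isMinOn_Icc_of_hasDerivAt ht.2 htime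
    (hasDerivAt_penalized_time ((hC12₁ i).1 t ht s hs).1 ((hC12₂ i).1 t ht s hs).1)
  linarith [mul_lt_mul_of_pos_right hK hcB]

lemma exists_nonneg_lower_bound_sub {A : Set ℝ} {B : Set (Fin d → ℝ)}
    (h₁ : ∃ M : ℝ, ∀ t ∈ A, ∀ s ∈ B, ∀ i : Fin k, |f₁ t s i| ≤ M * (1 + norm1 s))
    (h₂ : ∃ M : ℝ, ∀ t ∈ A, ∀ s ∈ B, ∀ i : Fin k, |f₂ t s i| ≤ M * (1 + norm1 s)) :
    ∃ M, 0 ≤ M ∧ ∀ t ∈ A, ∀ s ∈ B, ∀ i, -(M * (1 + norm1 s)) ≤ f₁ t s i - f₂ t s i := by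
  obtain ⟨M₁, hM₁⟩ := h₁
  obtain ⟨M₂, hM₂⟩ := h₂
  refine ⟨|M₁| + |M₂|, by positivity, fun t ht s hs i => ?_⟩
  have hn : 0 ≤ 1 + norm1 s := by
    have : 0 ≤ norm1 s := Finset.sum_nonneg fun l _ => abs_nonneg (s l)
    linarith
  have e₁ := mul_le_mul_of_nonneg_right (le_abs_self M₁) hn
  have e₂ := mul_le_mul_of_nonneg_right (le_abs_self M₂) hn
  linarith [hM₁ t ht s hs i, hM₂ t ht s hs i, neg_abs_le (f₁ t s i), le_abs_self (f₂ t s i)]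

lemma continuousOn_penalized {S : Set (Fin d → ℝ)} (hS : S ⊆ orthant d) {ε K : ℝ} {i : Fin k}
    (h₁ : ContinuousOn (fun p : ℝ × (Fin d → ℝ) => f₁ p.1 p.2 i) (Set.Icc 0 T ×ˢ S))
    (h₂ : ContinuousOn (fun p : ℝ × (Fin d → ℝ) => f₂ p.1 p.2 i) (Set.Icc 0 T ×ˢ S)) :
    ContinuousOn (fun p : ℝ × (Fin d → ℝ) => penalized f₁ f₂ ε K T p.1 p.2 i)
      (Set.Icc 0 T ×ˢ S) :=
  (h₁.sub h₂).add (Continuous.continuousOn (by fun_prop) |>.mul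
    (continuousOn_barrier.comp continuousOn_snd fun _ hp => hS hp.2))

lemma exists_radius_lt_sq_and_mul_le {M ε : ℝ} (hM : 0 ≤ M) (hε : 0 < ε) (n : ℕ) (b : ℝ) :
    ∃ R : ℝ, 0 < R ∧ b < R ^ 2 ∧ M * (1 + n * R) ≤ ε * R ^ 2 := by
  set R := 1 + |b| + M * (1 + n) / ε
  have hq : 0 ≤ M * (1 + n) / ε := by positivity
  have hR : 1 ≤ R := by linarith [abs_nonneg b]
  have hMR : M * (1 + n) ≤ ε * R := by
    have : M * (1 + n) / ε ≤ R := by linarith [abs_nonneg b]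
    rwa [div_le_iff₀' hε] at this
  refine ⟨R, by linarith, ?_, ?_⟩
  · nlinarith [le_abs_self b]
  · have hn : (0 : ℝ) ≤ n := n.cast_nonneg
    nlinarith [mul_le_mul_of_nonneg_right hMR (by linarith : (0 : ℝ) ≤ R)]

lemma norm1_le_of_mem_Icc {a R : ℝ} (ha : 0 ≤ a) {s : Fin d → ℝ}
    (hs : s ∈ Set.Icc (fun _ => a) fun _ => R) : norm1 s ≤ d * R := by
  calc norm1 s ≤ ∑ _l : Fin d, R := Finset.sum_le_sum fun l _ => by
        rw [abs_of_nonneg (ha.trans (hs.1 l))]; exact hs.2 l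
    _ = d * R := by simp

lemma penalized_nonneg_of_sq_le_barrier {M ε K R t : ℝ} {s : Fin d → ℝ} {i : Fin k}
    (hM : 0 ≤ M) (hgrowth : -(M * (1 + norm1 s)) ≤ f₁ t s i - f₂ t s i)
    (hs : norm1 s ≤ d * R) (hMR : M * (1 + d * R) ≤ ε * R ^ 2) (hε : 0 ≤ ε)
    (hKt : 0 ≤ K * (T - t)) (hR : R ^ 2 ≤ barrier s) :
    0 ≤ penalized f₁ f₂ ε K T t s i := by
  have hexp : ε * barrier s ≤ ε * exp (K * (T - t)) * barrier s :=
    mul_le_mul_of_nonneg_right (le_mul_of_one_le_right hε (one_le_exp hKt))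
      (zero_le_one.trans (one_le_barrier s))
  have := mul_le_mul_of_nonneg_left hs hM
  have := mul_le_mul_of_nonneg_left hR hε
  simp only [penalized]
  linarith

lemma penalized_nonneg_of_le {ε K t : ℝ} {s : Fin d → ℝ} {i : Fin k} (hε : 0 ≤ ε)
    (h : f₂ t s i ≤ f₁ t s i) : 0 ≤ penalized f₁ f₂ ε K T t s i := by
  have := mul_nonneg (mul_nonneg hε (exp_pos (K * (T - t))).le)
    (zero_le_one.trans (one_le_barrier s))
  simp only [penalized]
  linarith

lemma penalized_nonneg_of_isMin (hr : ∀ i, 0 ≤ r i) (hΛ1 : ∀ i j, i ≠ j → 0 ≤ Λ i j)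
    (hΛ2 : ∀ i, ∑ j, Λ i j = 0) (hU : IsOpen U) (hUsub : U ⊆ orthant d)
    (hC12₁ : C12On T U f₁) (hC12₂ : C12On T U f₂) {M : ℝ} (hM : 0 ≤ M)
    (hgrowth : ∀ t ∈ Set.Icc 0 T, ∀ s ∈ closure U ∩ orthant d, ∀ i,
      -(M * (1 + norm1 s)) ≤ f₁ t s i - f₂ t s i)
    (hsub : ∀ t ∈ Set.Ioo 0 T, ∀ s ∈ U, ∀ i,
      deriv (fun t' => f₁ t' s i) t + Lop r σm Λ f₁ t s i ≤ 0)
    (hsup : ∀ t ∈ Set.Ioo 0 T, ∀ s ∈ U, ∀ i,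
      0 ≤ deriv (fun t' => f₂ t' s i) t + Lop r σm Λ f₂ t s i)
    (hterm : ∀ s ∈ closure U ∩ orthant d, ∀ i, f₂ T s i ≤ f₁ T s i)
    (hbdry : ∀ t ∈ Set.Ioo 0 T, ∀ s ∈ frontier U ∩ orthant d, ∀ i, f₂ t s i ≤ f₁ t s i)
    {ε K R t₀ t : ℝ} {s : Fin d → ℝ} {i : Fin k} (hε : 0 < ε)
    (hK : ∀ i, 2 * r i + 3 * (amat σm i).trace < K) (hR : 0 < R)
    (hMR : M * (1 + d * R) ≤ ε * R ^ 2) (ht₀ : 0 < t₀)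
    (hD : (t, s) ∈ Set.Icc t₀ T ×ˢ (closure U ∩ Set.Icc (fun _ => R⁻¹) fun _ => R))
    (hmin : ∀ j, ∀ q ∈ Set.Icc t₀ T ×ˢ (closure U ∩ Set.Icc (fun _ => R⁻¹) fun _ => R),
      penalized f₁ f₂ ε K T t s i ≤ penalized f₁ f₂ ε K T q.1 q.2 j) :
    0 ≤ penalized f₁ f₂ ε K T t s i := by
  obtain ⟨ht, hsU, hsbox⟩ := hD
  have hs : s ∈ orthant d := fun l _ => (inv_pos.2 hR).trans_le (hsbox.1 l)
  rcases ht.2.eq_or_lt with rfl | htT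
  · exact penalized_nonneg_of_le hε.le (hterm s ⟨hsU, hs⟩ i)
  by_cases hsR : R ^ 2 ≤ barrier s
  · have htr : 0 ≤ (amat σm i).trace :=
      Finset.sum_nonneg fun l _ => mul_transpose_diag_nonneg _ l
    have hKt : 0 ≤ K * (T - t) := mul_nonneg (by linarith [hK i, hr i]) (sub_nonneg.2 ht.2)
    exact penalized_nonneg_of_sq_le_barrier hM (hgrowth t ⟨ht₀.le.trans ht.1, ht.2⟩
      s ⟨hsU, hs⟩ i) (norm1_le_of_mem_Icc (inv_pos.2 hR).le hsbox) hMR hε.le hKt hsR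
  have ht' : t ∈ Set.Ioo 0 T := ⟨ht₀.trans_le ht.1, htT⟩
  by_cases hfr : s ∈ frontier U
  · exact penalized_nonneg_of_le hε.le (hbdry t ht' s ⟨hfr, hs⟩ i)
  have hsU' : s ∈ U := by simpa [frontier, hU.interior_eq, hsU] using hfr
  have hsIoo := fun l => mem_Ioo_of_barrier_lt_sq hR (not_le.1 hsR) l (hs l trivial)
  refine penalized_nonneg_of_interior_isMin (hr i) (hΛ1 i) (hΛ2 i) hU hUsub hC12₁ hC12₂ hε
    (hK i) ht' hsU' (hsub t ht' s hsU' i) (hsup t ht' s hsU' i)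
    (fun t' ht'' => hmin i (t', s) ⟨⟨ht.1.trans ht''.1, ht''.2⟩, hsU, hsbox⟩) ?_
    (fun j => hmin j (t, s) ⟨ht, hsU, hsbox⟩)
  filter_upwards [hU.mem_nhds hsU', (isOpen_set_pi Set.finite_univ fun _ _ => isOpen_Ioo).mem_nhds
    fun l _ => hsIoo l] with y hyU hybox
  exact hmin i (t, y) ⟨ht, subset_closure hyU, fun l => (hybox l trivial).1.le,
    fun l => (hybox l trivial).2.le⟩

lemma penalized_nonneg (hr : ∀ i, 0 ≤ r i) (hΛ1 : ∀ i j, i ≠ j → 0 ≤ Λ i j)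
    (hΛ2 : ∀ i, ∑ j, Λ i j = 0) (hU : IsOpen U) (hUsub : U ⊆ orthant d)
    (hcont₁ : ∀ i, ContinuousOn (fun p : ℝ × (Fin d → ℝ) => f₁ p.1 p.2 i)
      (Set.Icc 0 T ×ˢ (closure U ∩ orthant d)))
    (hcont₂ : ∀ i, ContinuousOn (fun p : ℝ × (Fin d → ℝ) => f₂ p.1 p.2 i)
      (Set.Icc 0 T ×ˢ (closure U ∩ orthant d)))
    (hC12₁ : C12On T U f₁) (hC12₂ : C12On T U f₂) {M : ℝ} (hM : 0 ≤ M)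
    (hgrowth : ∀ t ∈ Set.Icc 0 T, ∀ s ∈ closure U ∩ orthant d, ∀ i,
      -(M * (1 + norm1 s)) ≤ f₁ t s i - f₂ t s i)
    (hsub : ∀ t ∈ Set.Ioo 0 T, ∀ s ∈ U, ∀ i,
      deriv (fun t' => f₁ t' s i) t + Lop r σm Λ f₁ t s i ≤ 0)
    (hsup : ∀ t ∈ Set.Ioo 0 T, ∀ s ∈ U, ∀ i,
      0 ≤ deriv (fun t' => f₂ t' s i) t + Lop r σm Λ f₂ t s i)
    (hterm : ∀ s ∈ closure U ∩ orthant d, ∀ i, f₂ T s i ≤ f₁ T s i)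
    (hbdry : ∀ t ∈ Set.Ioo 0 T, ∀ s ∈ frontier U ∩ orthant d, ∀ i, f₂ t s i ≤ f₁ t s i)
    {ε K : ℝ} (hε : 0 < ε) (hK : ∀ i, 2 * r i + 3 * (amat σm i).trace < K)
    {t₀ : ℝ} (ht₀ : t₀ ∈ Set.Ioo 0 T) {s₀ : Fin d → ℝ} (hs₀ : s₀ ∈ U) (i₀ : Fin k) :
    0 ≤ penalized f₁ f₂ ε K T t₀ s₀ i₀ := by
  obtain ⟨R, hR, hs₀R, hMR⟩ := exists_radius_lt_sq_and_mul_le hM hε d (barrier s₀)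
  set box : Set (Fin d → ℝ) := Set.Icc (fun _ => R⁻¹) fun _ => R
  have hbox : box ⊆ orthant d := fun s hs l _ => (inv_pos.2 hR).trans_le (hs.1 l)
  have hDsub : Set.Icc t₀ T ×ˢ (closure U ∩ box) ⊆ Set.Icc 0 T ×ˢ (closure U ∩ orthant d) :=
    Set.prod_mono (Set.Icc_subset_Icc_left ht₀.1.le) (Set.inter_subset_inter_right _ hbox)
  have hs₀box := fun l => mem_Ioo_of_barrier_lt_sq hR hs₀R l (hUsub hs₀ l trivial)
  have hp₀ : (t₀, s₀) ∈ Set.Icc t₀ T ×ˢ (closure U ∩ box) :=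
    ⟨⟨le_rfl, ht₀.2.le⟩, subset_closure hs₀, fun l => (hs₀box l).1.le, fun l => (hs₀box l).2.le⟩
  have : Nonempty (Fin k) := ⟨i₀⟩
  obtain ⟨i, p, hp, hmin⟩ :=
    (isCompact_Icc.prod (isCompact_Icc.inter_left isClosed_closure)).exists_forall_le_fintype
      ⟨_, hp₀⟩ fun i => (continuousOn_penalized Set.inter_subset_right (hcont₁ i) (hcont₂ i)).mono
        hDsub
  exact (penalized_nonneg_of_isMin hr hΛ1 hΛ2 hU hUsub hC12₁ hC12₂ hM hgrowth hsub hsup hterm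
    hbdry hε hK hR hMR ht₀.1 hp hmin).trans (hmin i₀ _ hp₀)

end Comparison

theorem stmt_14_general (d k : ℕ)
    (r : Fin k → ℝ) (hr : ∀ i, 0 ≤ r i)
    (σm : Fin k → Matrix (Fin d) (Fin d) ℝ)
    (Λ : Fin k → Fin k → ℝ) (hΛ1 : ∀ i j, i ≠ j → 0 ≤ Λ i j)
    (hΛ2 : ∀ i : Fin k, ∑ j, Λ i j = 0)
    (T : ℝ)
    (U : Set (Fin d → ℝ)) (hU : IsOpen U) (hUsub : U ⊆ orthant d)
    (f₁ f₂ : ℝ → (Fin d → ℝ) → Fin k → ℝ)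
    (hcont₁ : ∀ i : Fin k, ContinuousOn (fun p : ℝ × (Fin d → ℝ) => f₁ p.1 p.2 i)
        (Set.Icc 0 T ×ˢ (closure U ∩ orthant d)))
    (hcont₂ : ∀ i : Fin k, ContinuousOn (fun p : ℝ × (Fin d → ℝ) => f₂ p.1 p.2 i)
        (Set.Icc 0 T ×ˢ (closure U ∩ orthant d)))
    (hC12₁ : C12On T U f₁) (hC12₂ : C12On T U f₂)
    (hgrow₁ : ∃ M : ℝ, ∀ t ∈ Set.Icc (0:ℝ) T, ∀ s ∈ closure U ∩ orthant d,
        ∀ i : Fin k, |f₁ t s i| ≤ M * (1 + norm1 s))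
    (hgrow₂ : ∃ M : ℝ, ∀ t ∈ Set.Icc (0:ℝ) T, ∀ s ∈ closure U ∩ orthant d,
        ∀ i : Fin k, |f₂ t s i| ≤ M * (1 + norm1 s))
    (hsub : ∀ t ∈ Set.Ioo (0:ℝ) T, ∀ s ∈ U, ∀ i : Fin k,
        deriv (fun t' => f₁ t' s i) t + Lop r σm Λ f₁ t s i ≤ 0)
    (hsup : ∀ t ∈ Set.Ioo (0:ℝ) T, ∀ s ∈ U, ∀ i : Fin k,
        0 ≤ deriv (fun t' => f₂ t' s i) t + Lop r σm Λ f₂ t s i)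
    (hterm : ∀ s ∈ closure U ∩ orthant d, ∀ i : Fin k, f₂ T s i ≤ f₁ T s i)
    (hbdry : ∀ t ∈ Set.Ioo (0:ℝ) T, ∀ s ∈ frontier U ∩ orthant d, ∀ i : Fin k,
        f₂ t s i ≤ f₁ t s i) :
    ∀ t ∈ Set.Ioo (0:ℝ) T, ∀ s ∈ U, ∀ i : Fin k, f₂ t s i ≤ f₁ t s i := by
  intro t ht s hs i
  obtain ⟨M, hM, hgrowth⟩ := exists_nonneg_lower_bound_sub hgrow₁ hgrow₂
  obtain ⟨K, hK⟩ := (Set.finite_range fun i => 2 * r i + 3 * (amat σm i).trace).bddAbove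
  have hpen : ∀ ε > 0, 0 ≤ penalized f₁ f₂ ε (K + 1) T t s i := fun ε hε =>
    penalized_nonneg hr hΛ1 hΛ2 hU hUsub hcont₁ hcont₂ hC12₁ hC12₂ hM hgrowth hsub hsup hterm
      hbdry hε (fun i => (hK ⟨i, rfl⟩).trans_lt (lt_add_one K)) ht hs i
  set c := exp ((K + 1) * (T - t)) * barrier s
  have hc : 0 < c := mul_pos (exp_pos _) (zero_lt_one.trans_le (one_le_barrier s))
  refine le_of_forall_pos_le_add fun δ hδ => ?_
  have := hpen (δ / c) (div_pos hδ hc)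
  rw [penalized, mul_assoc, div_mul_cancel₀ δ hc.ne'] at this
  linarith

theorem stmt_14 (d k : ℕ) (hd : 1 ≤ d) (hk : 0 < k)
    (r : Fin k → ℝ) (hr : ∀ i, 0 ≤ r i)
    (σm : Fin k → Matrix (Fin d) (Fin d) ℝ) (hσ : ∀ i, IsUnit (σm i).det)
    (Λ : Fin k → Fin k → ℝ) (hΛ1 : ∀ i j, i ≠ j → 0 ≤ Λ i j)
    (hΛ2 : ∀ i : Fin k, ∑ j, Λ i j = 0)
    (T : ℝ) (hT : 0 < T)
    (U : Set (Fin d → ℝ)) (hU : IsOpen U) (hUsub : U ⊆ orthant d)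
    (f₁ f₂ : ℝ → (Fin d → ℝ) → Fin k → ℝ)
    (hcont₁ : ∀ i : Fin k, ContinuousOn (fun p : ℝ × (Fin d → ℝ) => f₁ p.1 p.2 i)
        (Set.Icc 0 T ×ˢ (closure U ∩ orthant d)))
    (hcont₂ : ∀ i : Fin k, ContinuousOn (fun p : ℝ × (Fin d → ℝ) => f₂ p.1 p.2 i)
        (Set.Icc 0 T ×ˢ (closure U ∩ orthant d)))
    (hC12₁ : C12On T U f₁) (hC12₂ : C12On T U f₂)
    (hgrow₁ : ∃ M : ℝ, ∀ t ∈ Set.Icc (0:ℝ) T, ∀ s ∈ closure U ∩ orthant d,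
        ∀ i : Fin k, |f₁ t s i| ≤ M * (1 + norm1 s))
    (hgrow₂ : ∃ M : ℝ, ∀ t ∈ Set.Icc (0:ℝ) T, ∀ s ∈ closure U ∩ orthant d,
        ∀ i : Fin k, |f₂ t s i| ≤ M * (1 + norm1 s))
    (hsub : ∀ t ∈ Set.Ioo (0:ℝ) T, ∀ s ∈ U, ∀ i : Fin k,
        deriv (fun t' => f₁ t' s i) t + Lop r σm Λ f₁ t s i ≤ 0)
    (hsup : ∀ t ∈ Set.Ioo (0:ℝ) T, ∀ s ∈ U, ∀ i : Fin k,
        0 ≤ deriv (fun t' => f₂ t' s i) t + Lop r σm Λ f₂ t s i)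
    (hterm : ∀ s ∈ closure U ∩ orthant d, ∀ i : Fin k, f₂ T s i ≤ f₁ T s i)
    (hbdry : ∀ t ∈ Set.Ioo (0:ℝ) T, ∀ s ∈ frontier U ∩ orthant d, ∀ i : Fin k,
        f₂ t s i ≤ f₁ t s i) :
    ∀ t ∈ Set.Ioo (0:ℝ) T, ∀ s ∈ U, ∀ i : Fin k, f₂ t s i ≤ f₁ t s i :=
  stmt_14_general d k r hr σm Λ hΛ1 hΛ2 T U hU hUsub f₁ f₂ hcont₁ hcont₂ hC12₁ hC12₂ hgrow₁ hgrow₂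
    hsub hsup hterm hbdry
end
end

section
/- Fix l ∈ {1,…,d} and suppose D_l := min_{i∈X}(a_{ll}(i) − 2r(i)) > 0. Set γ_l = 1/(2 max_{i∈X} a_{ll}(i)) and k_l = exp(max_{i∈X} a_{ll}(i) / D_l). Then for every ε_l > 0, the function y_l(t,s,i) = (T+ε_l−t)^{−1/2} exp(−γ_l (ln(s_l/(k_l s_l^u)))²/(T+ε_l−t)) satisfies ∂y_l/∂t(t,s,i) + L y_l(t,s,i) ≤ 0 for all (t,s,i) ∈ (0,T) × R × X. -/
open MeasureTheory Real Filter Matrix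

noncomputable section

/-- The open box `R = Π_l (s_l^b, s_l^u)`. -/
def Rset {d : ℕ} (sb su : Fin d → ℝ) : Set (Fin d → ℝ) :=
  Set.univ.pi fun l => Set.Ioo (sb l) (su l)

/-- The barrier function `y_l(t,s) = (T+ε_l−t)^{-1/2} exp(−γ_l (ln(s_l/(k_l s_l^u)))²/(T+ε_l−t))`. -/
def yl {d : ℕ} (T εl γl kl slu : ℝ) (l : Fin d) (t : ℝ) (s : Fin d → ℝ) : ℝ :=
  (Real.sqrt (T + εl - t))⁻¹ *
    Real.exp (-γl * (Real.log (s l / (kl * slu)))^2 / (T + εl - t))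

/-!
The barrier depends on `s` only through `u = log (s_l / (k_l s_l^u))`, so `L` acts on it as the
one-dimensional Euler operator `r c ∂_c + ½ a_ll c² ∂_c² − r`; with `τ = T + ε_l − t` this gives
`(∂_t + L) y = y · [(1 + 2γu(a_ll − 2r)) / (2τ) + γu²(2γa_ll − 1) / τ² − γa_ll / τ − r]`.
The choice of `γ_l` makes `2γa_ll ≤ 1`, which disposes of the `u²` term. Since `s_l < s_l^u`,
`u < −log k_l = −max a_ll / D_l`, and as `a_ll − 2r ≥ D_l > 0` this forces `2γu(a_ll − 2r) ≤ −1`: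
the drift absorbs the `1 / (2τ)` coming from the prefactor `τ^{-1/2}`.
-/

section CoordinateFunctions

variable {d : ℕ}

lemma pd_comp_eval (g : ℝ → ℝ) (l m : Fin d) :
    pd m (fun s => g (s l)) = fun s => if m = l then deriv g (s l) else 0 := by
  funext s
  unfold pd
  split_ifs with h
  · subst h
    simp only [Function.update_self]
  · simp only [Function.update_of_ne (Ne.symm h), deriv_const]

lemma pd_pd_comp_eval (g : ℝ → ℝ) (l m m' : Fin d) (s : Fin d → ℝ) :
    pd m (pd m' (fun s => g (s l))) s =
      if m = l ∧ m' = l then deriv (deriv g) (s l) else 0 := by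
  rw [pd_comp_eval]
  by_cases hm' : m' = l
  · simp only [hm', if_true, and_true, pd_comp_eval]
  · simp only [hm', if_false, and_false, pd, deriv_const']

lemma Lop_comp_eval {k : ℕ} (r : Fin k → ℝ) (σm : Fin k → Matrix (Fin d) (Fin d) ℝ)
    (Λ : Fin k → Fin k → ℝ) (i : Fin k) (hΛ : ∑ j, Λ i j = 0)
    (g : ℝ → ℝ → ℝ) (l : Fin d) (t : ℝ) (s : Fin d → ℝ) :
    Lop r σm Λ (fun t s _ => g t (s l)) t s i =
      r i * (s l * deriv (g t) (s l))
        + 1 / 2 * amat σm i l l * (s l ^ 2 * deriv (deriv (g t)) (s l))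
        - r i * g t (s l) := by
  simp only [Lop, pd_pd_comp_eval (g t)]
  simp only [pd_comp_eval (g t), ← Finset.sum_mul, hΛ]
  simp only [mul_ite, mul_zero, Finset.sum_ite_eq', Finset.mem_univ, ↓reduceIte, ite_and,
    Finset.sum_ite_irrel, Finset.sum_const_zero, zero_mul, add_zero]
  ring

end CoordinateFunctions

def logGaussian (A γ τ K c : ℝ) : ℝ := A * exp (-γ * log (c / K) ^ 2 / τ)

section LogGaussian

variable {A γ τ K c : ℝ}

lemma hasDerivAt_log_div_const (hK : K ≠ 0) (hc : c ≠ 0) :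
    HasDerivAt (fun c => log (c / K)) c⁻¹ c := by
  refine (((hasDerivAt_id' c).div_const K).log (div_ne_zero hc hK)).congr_deriv ?_
  field_simp

lemma hasDerivAt_logGaussian (hK : K ≠ 0) (hc : c ≠ 0) :
    HasDerivAt (logGaussian A γ τ K)
      (logGaussian A γ τ K c * (-2 * γ / τ * (log (c / K) / c))) c := by
  have hexponent := (((hasDerivAt_log_div_const hK hc).fun_pow 2).const_mul (-γ)).div_const τ
  refine (hexponent.exp.const_mul A).congr_deriv ?_
  simp only [logGaussian]
  field_simp
  ring

lemma mul_deriv_logGaussian (hK : K ≠ 0) (hc : c ≠ 0) :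
    c * deriv (logGaussian A γ τ K) c = logGaussian A γ τ K c * (-2 * γ / τ * log (c / K)) := by
  rw [(hasDerivAt_logGaussian hK hc).deriv]
  field_simp

lemma sq_mul_deriv_deriv_logGaussian (hK : K ≠ 0) (hc : c ≠ 0) :
    c ^ 2 * deriv (deriv (logGaussian A γ τ K)) c = logGaussian A γ τ K c *
      (4 * γ ^ 2 / τ ^ 2 * log (c / K) ^ 2 - 2 * γ / τ + 2 * γ / τ * log (c / K)) := by
  have hderiv : deriv (logGaussian A γ τ K) =ᶠ[nhds c]
      fun c => logGaussian A γ τ K c * (-2 * γ / τ * (log (c / K) / c)) := by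
    filter_upwards [isOpen_ne.mem_nhds hc] with c' hc'
    exact (hasDerivAt_logGaussian hK hc').deriv
  have hquot : HasDerivAt (fun c => log (c / K) / c) ((1 - log (c / K)) / c ^ 2) c := by
    refine ((hasDerivAt_log_div_const hK hc).fun_div (hasDerivAt_id' c) hc).congr_deriv ?_
    field_simp
  have hprod : HasDerivAt (fun c => logGaussian A γ τ K c * (-2 * γ / τ * (log (c / K) / c)))
      (logGaussian A γ τ K c * (-2 * γ / τ * (log (c / K) / c)) * (-2 * γ / τ * (log (c / K) / c))
        + logGaussian A γ τ K c * (-2 * γ / τ * ((1 - log (c / K)) / c ^ 2))) c :=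
    (hasDerivAt_logGaussian hK hc).mul (hquot.const_mul _)
  rw [hderiv.deriv_eq, hprod.deriv]
  field_simp
  ring

lemma hasDerivAt_logGaussian_time {a t : ℝ} (ht : t < a) :
    HasDerivAt (fun t => logGaussian (√(a - t))⁻¹ γ (a - t) K c)
      (logGaussian (√(a - t))⁻¹ γ (a - t) K c *
        (1 / (2 * (a - t)) - γ * log (c / K) ^ 2 / (a - t) ^ 2)) t := by
  have hτ : 0 < a - t := sub_pos.2 ht
  have hτ' : HasDerivAt (fun t => a - t) (-1) t := by
    simpa using (hasDerivAt_id t).const_sub a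
  have hsqrt := ((Real.hasDerivAt_sqrt hτ.ne').comp t hτ').fun_inv (Real.sqrt_pos.2 hτ).ne'
  have hexp := ((hasDerivAt_const t (-γ * log (c / K) ^ 2)).fun_div hτ' hτ.ne').exp
  refine (hsqrt.mul hexp).congr_deriv ?_
  have hsq : √(a - t) ^ 2 = a - t := Real.sq_sqrt hτ.le
  simp only [logGaussian, Function.comp_apply]
  field_simp
  rw [hsq]
  ring

end LogGaussian

lemma barrier_inequality {Y a r γ τ u : ℝ} (hY : 0 ≤ Y) (hτ : 0 < τ) (hr : 0 ≤ r) (hγ : 0 ≤ γ)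
    (ha : 0 ≤ a) (hγa : 2 * γ * a ≤ 1) (hu : 2 * γ * u * (a - 2 * r) ≤ -1) :
    Y * (1 / (2 * τ) - γ * u ^ 2 / τ ^ 2)
      + (r * (Y * (-2 * γ / τ * u))
        + 1 / 2 * a * (Y * (4 * γ ^ 2 / τ ^ 2 * u ^ 2 - 2 * γ / τ + 2 * γ / τ * u))
        - r * Y) ≤ 0 := by
  have hsplit : Y * (1 / (2 * τ) - γ * u ^ 2 / τ ^ 2)
      + (r * (Y * (-2 * γ / τ * u))
        + 1 / 2 * a * (Y * (4 * γ ^ 2 / τ ^ 2 * u ^ 2 - 2 * γ / τ + 2 * γ / τ * u))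
        - r * Y)
      = Y * ((1 + 2 * γ * u * (a - 2 * r)) / (2 * τ)
          + γ * u ^ 2 * (2 * γ * a - 1) / τ ^ 2 - (γ * a / τ + r)) := by
    field_simp
    ring
  rw [hsplit]
  refine mul_nonpos_of_nonneg_of_nonpos hY ?_
  have hdrift : (1 + 2 * γ * u * (a - 2 * r)) / (2 * τ) ≤ 0 :=
    div_nonpos_of_nonpos_of_nonneg (by linarith) (by positivity)
  have hdiffusion : γ * u ^ 2 * (2 * γ * a - 1) / τ ^ 2 ≤ 0 :=
    div_nonpos_of_nonpos_of_nonneg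
      (mul_nonpos_of_nonneg_of_nonpos (by positivity) (by linarith)) (by positivity)
  have hrest : 0 ≤ γ * a / τ + r := by positivity
  linarith

lemma log_div_exp_mul_mul_le_neg {M D a r s su : ℝ} (hM : 0 < M) (hD : 0 < D)
    (hDa : D ≤ a - 2 * r) (hs : 0 < s) (hsu : s < su) :
    log (s / (exp (M / D) * su)) * (a - 2 * r) ≤ -M := by
  have hsu0 : 0 < su := hs.trans hsu
  have hlog : log (s / (exp (M / D) * su)) = log (s / su) - M / D := by
    rw [mul_comm, ← div_div, Real.log_div (by positivity) (exp_pos _).ne', Real.log_exp]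
  have hneg : log (s / su) < 0 :=
    Real.log_neg (by positivity) ((div_lt_one hsu0).2 hsu)
  set u := log (s / (exp (M / D) * su))
  have hu : u * D < -M := by
    have := mul_lt_mul_of_pos_right (show u < -(M / D) by linarith) hD
    rwa [neg_mul, div_mul_cancel₀ _ hD.ne'] at this
  have hua : u * (a - 2 * r) ≤ u * D :=
    mul_le_mul_of_nonpos_left hDa (by linarith [div_pos hM hD])
  linarith

lemma yl_eq_logGaussian {d : ℕ} (T ε γ k su : ℝ) (l : Fin d) (t : ℝ) (s : Fin d → ℝ) :
    yl T ε γ k su l t s = logGaussian (√(T + ε - t))⁻¹ γ (T + ε - t) (k * su) (s l) := rfl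

theorem stmt_15_general (d k : ℕ) (hk : 0 < k)
    (r : Fin k → ℝ) (hr : ∀ i, 0 ≤ r i)
    (σm : Fin k → Matrix (Fin d) (Fin d) ℝ)
    (Λ : Fin k → Fin k → ℝ)
    (hΛ2 : ∀ i : Fin k, ∑ j, Λ i j = 0)
    (T : ℝ)
    (sb su : Fin d → ℝ) (hbu : ∀ l, 0 ≤ sb l ∧ sb l < su l)
    (l : Fin d)
    (Dl : ℝ)
    (hDl : Dl = Finset.univ.inf' ⟨⟨0, hk⟩, Finset.mem_univ _⟩
        (fun i : Fin k => amat σm i l l - 2 * r i))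
    (hDpos : 0 < Dl)
    (amax : ℝ)
    (hamax : amax = Finset.univ.sup' ⟨⟨0, hk⟩, Finset.mem_univ _⟩
        (fun i : Fin k => amat σm i l l))
    (γl kl : ℝ) (hγl : γl = 1 / (2 * amax)) (hkl : kl = Real.exp (amax / Dl)) :
    ∀ εl : ℝ, 0 < εl → ∀ t ∈ Set.Ioo (0:ℝ) T, ∀ s ∈ Rset sb su, ∀ i : Fin k,
      deriv (fun t' => yl T εl γl kl (su l) l t' s) t
        + Lop r σm Λ (fun t'' s'' _ => yl T εl γl kl (su l) l t'' s'') t s i ≤ 0 := by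
  intro ε hε t ⟨_, htT⟩ s hs i
  subst hkl
  obtain ⟨hsb, hsu⟩ := hs l (Set.mem_univ l)
  have hsl : 0 < s l := (hbu l).1.trans_lt hsb
  have hK : rexp (amax / Dl) * su l ≠ 0 := (mul_pos (exp_pos _) (hsl.trans hsu)).ne'
  have hDa : Dl ≤ amat σm i l l - 2 * r i := hDl ▸ Finset.inf'_le _ (Finset.mem_univ i)
  have ha : amat σm i l l ≤ amax :=
    hamax ▸ Finset.le_sup' (fun i => amat σm i l l) (Finset.mem_univ i)
  have ha0 : 0 < amat σm i l l := by linarith [hr i]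
  have hM : 0 < amax := ha0.trans_le ha
  have hγ : 0 < γl := by rw [hγl]; positivity
  have h2γ : 2 * γl * amax = 1 := by rw [hγl]; field_simp
  have hγa : 2 * γl * amat σm i l l ≤ 1 := h2γ ▸ by gcongr
  have hu : 2 * γl * log (s l / (rexp (amax / Dl) * su l)) * (amat σm i l l - 2 * r i) ≤ -1 := by
    rw [mul_assoc, ← h2γ, ← mul_neg]
    gcongr
    exact log_div_exp_mul_mul_le_neg hM hDpos hDa hsl hsu
  simp only [yl_eq_logGaussian]
  rw [(hasDerivAt_logGaussian_time (by linarith)).deriv,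
    Lop_comp_eval r σm Λ i (hΛ2 i)
      (fun t c => logGaussian (√(T + ε - t))⁻¹ γl (T + ε - t) (rexp (amax / Dl) * su l) c),
    mul_deriv_logGaussian hK hsl.ne', sq_mul_deriv_deriv_logGaussian hK hsl.ne']
  exact barrier_inequality (by unfold logGaussian; positivity) (by linarith) (hr i) hγ.le ha0.le
    hγa hu

theorem stmt_15 (d k : ℕ) (hd : 1 ≤ d) (hk : 0 < k)
    (r : Fin k → ℝ) (hr : ∀ i, 0 ≤ r i)
    (σm : Fin k → Matrix (Fin d) (Fin d) ℝ) (hσ : ∀ i, IsUnit (σm i).det)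
    (Λ : Fin k → Fin k → ℝ) (hΛ1 : ∀ i j, i ≠ j → 0 ≤ Λ i j)
    (hΛ2 : ∀ i : Fin k, ∑ j, Λ i j = 0)
    (T : ℝ) (hT : 0 < T)
    (sb su : Fin d → ℝ) (hbu : ∀ l, 0 ≤ sb l ∧ sb l < su l)
    (l : Fin d)
    (Dl : ℝ)
    (hDl : Dl = Finset.univ.inf' ⟨⟨0, hk⟩, Finset.mem_univ _⟩
        (fun i : Fin k => amat σm i l l - 2 * r i))
    (hDpos : 0 < Dl)
    (amax : ℝ)
    (hamax : amax = Finset.univ.sup' ⟨⟨0, hk⟩, Finset.mem_univ _⟩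
        (fun i : Fin k => amat σm i l l))
    (γl kl : ℝ) (hγl : γl = 1 / (2 * amax)) (hkl : kl = Real.exp (amax / Dl)) :
    ∀ εl : ℝ, 0 < εl → ∀ t ∈ Set.Ioo (0:ℝ) T, ∀ s ∈ Rset sb su, ∀ i : Fin k,
      deriv (fun t' => yl T εl γl kl (su l) l t' s) t
        + Lop r σm Λ (fun t'' s'' _ => yl T εl γl kl (su l) l t'' s'') t s i ≤ 0 :=
  stmt_15_general d k hk r hr σm Λ hΛ2 T sb su hbu l Dl hDl hDpos amax hamax γl kl hγl hkl
end
end
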